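/- arXiv:2306.02743 — 4 statements merged into one kernel-verified Lean document; each statement's English description precedes it below -/
import Mathlib

section
/- Lower bound for labelled complete graphs (Corollary 6.3(i)): Let n ≥ 2 and let (n, E, t, h, z) be ℤ-labelled graph data whose underlying directed multigraph is an orientation of the complete graph K_n (no selfloops and exactly one edge e with {t e, h e} = {i, j} for each pair of distinct i, j ∈ Fin n), with arbitrary labels z. Then the data is not (n−2)-realizable: there exist a dimension m and a periodic framework of the data in ℝ^m admitting no equivalent periodic framework in ℝ^{n−2}. -/
/-- The edge vector of edge `e` of ℤ-labelled graph data with tail map `t`, head map `h`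
and labels `z`, with respect to a point configuration `p` and lattice vector `ℓ`. -/
noncomputable def edgeVec {V E : Type*} {m : ℕ} (t h : E → V) (z : E → ℤ)
    (p : V → EuclideanSpace ℝ (Fin m)) (ℓ : EuclideanSpace ℝ (Fin m)) (e : E) :
    EuclideanSpace ℝ (Fin m) :=
  p (h e) + (z e : ℝ) • ℓ - p (t e)

/-- ℤ-labelled graph data `(V, E, t, h, z)` is `d`-realizable if every periodic framework
`(p, ℓ)` of the data in any dimension `m` admits an equivalent periodic framework in `ℝ^d`. -/
def IsRealizable (V E : Type*) (t h : E → V) (z : E → ℤ) (d : ℕ) : Prop :=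
  ∀ (m : ℕ) (p : V → EuclideanSpace ℝ (Fin m)) (ℓ : EuclideanSpace ℝ (Fin m)), ℓ ≠ 0 →
    ∃ (q : V → EuclideanSpace ℝ (Fin d)) (ℓ' : EuclideanSpace ℝ (Fin d)), ℓ' ≠ 0 ∧
      ‖ℓ'‖ = ‖ℓ‖ ∧ ∀ e : E, ‖edgeVec t h z q ℓ' e‖ = ‖edgeVec t h z p ℓ e‖

open Finset in
lemma gram_linearIndependent {d N : ℕ} (u : Fin N → EuclideanSpace ℝ (Fin d))
    (S Δ : ℝ) (hΔ : 0 ≤ Δ)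
    (hdiag : ∀ i, S^2 - Δ ≤ inner ℝ (u i) (u i))
    (hoff : ∀ i j, i ≠ j → |(inner ℝ (u i) (u j) : ℝ) - S^2/2| ≤ 3*Δ/2)
    (hbig : Δ + (3*Δ/2) * N < S^2/2) :
    LinearIndependent ℝ u := by
  rw [Fintype.linearIndependent_iff]
  intro c hc
  set g : Fin N → Fin N → ℝ := fun i j => inner ℝ (u i) (u j) with hg
  have hT : ∑ i, ∑ j, c i * c j * g i j = 0 := by
    have : (inner ℝ (∑ i, c i • u i) (∑ j, c j • u j) : ℝ) = ∑ i, ∑ j, c i * c j * g i j := by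
      rw [sum_inner]
      refine Finset.sum_congr rfl fun i _ => ?_
      rw [real_inner_smul_left, inner_sum, Finset.mul_sum]
      refine Finset.sum_congr rfl fun j _ => ?_
      rw [real_inner_smul_right]; ring
    rw [hc] at this
    simpa using this.symm
  have hterm : ∀ i j, c i * c j * (g i j - S^2/2) ≥
      (if i = j then c i^2 * (S^2/2 - Δ) else 0) - (3*Δ/2) * |c i| * |c j| := by
    intro i j
    by_cases hij : i = j
    · subst hij
      rw [if_pos rfl]
      have h1 := hdiag i
      have h2 : |c i| * |c i| = c i ^ 2 := by rw [abs_mul_abs_self]; ring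
      nlinarith [sq_nonneg (c i), hΔ]
    · rw [if_neg hij]
      have h1 := hoff i j hij
      have h2 : c i * c j * (g i j - S^2/2) ≥ -(|c i| * |c j| * |g i j - S^2/2|) := by
        rw [← abs_mul, ← abs_mul]
        exact neg_abs_le _
      have h3 : |c i| * |c j| * |g i j - S^2/2| ≤ |c i| * |c j| * (3*Δ/2) :=
        mul_le_mul_of_nonneg_left h1 (by positivity)
      nlinarith
  set C : ℝ := ∑ i, c i ^ 2 with hC
  set B : ℝ := ∑ i, |c i| with hB
  have hsum : ∑ i, ∑ j, c i * c j * (g i j - S^2/2) ≥ C * (S^2/2 - Δ) - (3*Δ/2) * B^2 := by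
    have key : ∀ i : Fin N, ∑ j, (c i * c j * (g i j - S^2/2)) ≥
        c i^2 * (S^2/2 - Δ) - |c i| * ((3*Δ/2) * B) := by
      intro i
      have h4 := Finset.sum_le_sum (fun j (_ : j ∈ univ) => hterm i j)
      have hrw : ∑ j, ((if i = j then c i^2 * (S^2/2 - Δ) else 0) - (3*Δ/2) * |c i| * |c j|)
          = c i^2 * (S^2/2 - Δ) - |c i| * ((3*Δ/2) * B) := by
        rw [Finset.sum_sub_distrib, Finset.sum_ite_eq univ i
          (fun _ => c i^2 * (S^2/2 - Δ)), if_pos (Finset.mem_univ i)]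
        congr 1
        have : ∑ j, (3*Δ/2) * |c i| * |c j| = ∑ j, |c j| * ((3*Δ/2) * |c i|) :=
          Finset.sum_congr rfl fun j _ => by ring
        rw [this, ← Finset.sum_mul, ← hB]; ring
      calc ∑ j, (c i * c j * (g i j - S^2/2))
          ≥ ∑ j, ((if i = j then c i^2 * (S^2/2 - Δ) else 0) - (3*Δ/2) * |c i| * |c j|) := h4
        _ = c i^2 * (S^2/2 - Δ) - |c i| * ((3*Δ/2) * B) := hrw
    calc ∑ i, ∑ j, c i * c j * (g i j - S^2/2)
        ≥ ∑ i, (c i^2 * (S^2/2 - Δ) - |c i| * ((3*Δ/2) * B)) :=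
          Finset.sum_le_sum (fun i _ => key i)
      _ = C * (S^2/2 - Δ) - (3*Δ/2) * B^2 := by
          rw [Finset.sum_sub_distrib, ← Finset.sum_mul, ← Finset.sum_mul, ← hC, ← hB]; ring
  have hsplit : ∑ i, ∑ j, c i * c j * (g i j - S^2/2) =
      (∑ i, ∑ j, c i * c j * g i j) - (∑ i, c i)^2 * (S^2/2) := by
    have h5 : ∀ i : Fin N, ∑ j, c i * c j * (g i j - S^2/2) =
        (∑ j, c i * c j * g i j) - c i * ((∑ j, c j) * (S^2/2)) := by
      intro i
      have : ∑ j, c i * c j * (g i j - S^2/2)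
          = ∑ j, (c i * c j * g i j - c j * (c i * (S^2/2))) :=
        Finset.sum_congr rfl fun j _ => by ring
      rw [this, Finset.sum_sub_distrib, ← Finset.sum_mul]
      ring
    rw [Finset.sum_congr rfl fun i _ => h5 i, Finset.sum_sub_distrib]
    have : ∑ i, c i * ((∑ j, c j) * (S^2/2)) = (∑ i, c i) * ((∑ j, c j) * (S^2/2)) := by
      rw [← Finset.sum_mul]
    rw [this]; ring
  have hBC : B^2 ≤ N * C := by
    simpa [hB, hC, sq_abs] using
      sq_sum_le_card_mul_sum_sq (s := (univ : Finset (Fin N))) (f := fun i => |c i|)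
  have hCnonneg : 0 ≤ C := Finset.sum_nonneg fun i _ => sq_nonneg _
  have hK : (0:ℝ) ≤ (∑ i, c i)^2 * (S^2/2) := by positivity
  have hfinal : C * (S^2/2 - Δ - (3*Δ/2) * N) ≤ 0 := by nlinarith
  have hcoef : 0 < S^2/2 - Δ - (3*Δ/2) * N := by linarith
  have hC0 : C = 0 := le_antisymm (by nlinarith) hCnonneg
  intro i
  have := (Finset.sum_eq_zero_iff_of_nonneg (fun j _ => sq_nonneg (c j))).mp hC0 i (Finset.mem_univ i)
  exact pow_eq_zero_iff two_ne_zero |>.mp this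

set_option maxHeartbeats 2000000 in
/-- Corollary 6.3(i): ℤ-labelled graph data whose underlying directed multigraph is an
orientation of the complete graph `K_n` (no selfloops, exactly one edge between each pair
of distinct vertices), with arbitrary labels, is not `(n-2)`-realizable. -/
theorem labelled_completeGraph_not_realizable (n : ℕ) (hn : 2 ≤ n) (E : Type*) [Fintype E]
    (t h : E → Fin n) (z : E → ℤ)
    (hloop : ∀ e : E, t e ≠ h e)
    (hcomplete : ∀ i j : Fin n, i ≠ j → ∃! e : E, ({t e, h e} : Set (Fin n)) = {i, j}) :
    ¬ IsRealizable (Fin n) E t h z (n - 2) := by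
  intro hreal
  classical
  have hn0 : (0:ℝ) < n := by exact_mod_cast Nat.lt_of_lt_of_le (by norm_num) hn
  have hn2 : (2:ℝ) ≤ n := by exact_mod_cast hn
  obtain ⟨Z, hZ1, hzZ⟩ : ∃ Z : ℝ, 1 ≤ Z ∧ ∀ e : E, |(z e : ℝ)| ≤ Z := by
    refine ⟨1 + ∑ e : E, |(z e : ℝ)|, ?_, ?_⟩
    · have : 0 ≤ ∑ e : E, |(z e : ℝ)| := Finset.sum_nonneg fun e _ => abs_nonneg _
      linarith
    · intro e
      have h1 := Finset.single_le_sum (f := fun e => |(z e : ℝ)|)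
        (fun e _ => abs_nonneg _) (Finset.mem_univ e)
      linarith
  have hZ0 : (0:ℝ) < Z := by linarith
  obtain ⟨s, hsdef, hs0, hsZ⟩ :
      ∃ s : ℝ, s = 24 * n * Z ∧ 0 < s ∧ 48 * Z ≤ s := by
    refine ⟨24 * n * Z, rfl, by positivity, by nlinarith⟩
  -- construct the framework in ℝ^n and record its key properties
  obtain ⟨p, ℓ, hlne, hlnorm, hev⟩ :
      ∃ (p : Fin n → EuclideanSpace ℝ (Fin n)) (ℓ : EuclideanSpace ℝ (Fin n)),
        ℓ ≠ 0 ∧ ‖ℓ‖ = 1 ∧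
        ∀ e : E, ‖edgeVec t h z p ℓ e‖ = Real.sqrt (2*s^2 + (z e:ℝ)^2) := by
    have hsqrtn : 0 < Real.sqrt n := Real.sqrt_pos.mpr hn0
    refine ⟨fun i => EuclideanSpace.single i s, WithLp.toLp 2 (fun _ => (Real.sqrt n)⁻¹), ?_, ?_, ?_⟩
    case refine_2 =>
      rw [EuclideanSpace.norm_eq]
      have hc : ∀ i : Fin n,
          ‖(WithLp.toLp 2 (fun _ => (Real.sqrt n)⁻¹) : EuclideanSpace ℝ (Fin n)) i‖^2 = (n:ℝ)⁻¹ := by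
        intro i
        rw [Real.norm_eq_abs, PiLp.toLp_apply, abs_of_pos (inv_pos.mpr hsqrtn), inv_pow,
          Real.sq_sqrt hn0.le]
      rw [Finset.sum_congr rfl fun i _ => hc i]
      rw [Finset.sum_const, Finset.card_univ, Fintype.card_fin, nsmul_eq_mul,
        mul_inv_cancel₀ (ne_of_gt hn0), Real.sqrt_one]
    case refine_1 =>
      intro h0
      have h1 : ((WithLp.toLp 2 (fun _ => (Real.sqrt n)⁻¹) : EuclideanSpace ℝ (Fin n))) ⟨0, by omega⟩ = 0 := by
        rw [h0]; rfl
      simp only [PiLp.toLp_apply] at h1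
      exact absurd h1 (ne_of_gt (inv_pos.mpr hsqrtn))
    case refine_3 =>
      set p : Fin n → EuclideanSpace ℝ (Fin n) := fun i => EuclideanSpace.single i s with hpdef
      set ℓ : EuclideanSpace ℝ (Fin n) := WithLp.toLp 2 (fun _ => (Real.sqrt n)⁻¹) with hldef
      have hlnorm2 : ‖ℓ‖ = 1 := by
        rw [EuclideanSpace.norm_eq]
        have hc : ∀ i : Fin n, ‖ℓ i‖^2 = (n:ℝ)⁻¹ := by
          intro i
          have h0 : ℓ i = (Real.sqrt n)⁻¹ := rfl
          rw [h0, Real.norm_eq_abs, abs_of_pos (inv_pos.mpr hsqrtn), inv_pow,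
            Real.sq_sqrt hn0.le]
        rw [Finset.sum_congr rfl fun i _ => hc i]
        rw [Finset.sum_const, Finset.card_univ, Fintype.card_fin, nsmul_eq_mul,
          mul_inv_cancel₀ (ne_of_gt hn0), Real.sqrt_one]
      have hip : ∀ i : Fin n, (inner ℝ (p i) ℓ : ℝ) = s * (Real.sqrt n)⁻¹ := by
        intro i
        have h1 : (inner ℝ (p i) ℓ : ℝ) = s * ℓ i := by
          simp [hpdef, EuclideanSpace.inner_single_left]
        have h2 : ℓ i = (Real.sqrt n)⁻¹ := rfl
        rw [h1, h2]
      have hpn : ∀ i j : Fin n, i ≠ j → ‖p i - p j‖^2 = 2 * s^2 := by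
        intro i j hij
        have h2 : (inner ℝ (p i) (p j) : ℝ) = 0 := by
          simp [hpdef, EuclideanSpace.inner_single_left, EuclideanSpace.single_apply,
            Ne.symm hij, hij]
        have h1 : ‖p i‖ = |s| := by simp [hpdef, EuclideanSpace.norm_single, Real.norm_eq_abs]
        have h1' : ‖p j‖ = |s| := by simp [hpdef, EuclideanSpace.norm_single, Real.norm_eq_abs]
        rw [norm_sub_sq_real, h1, h1', h2, sq_abs]
        ring
      intro e
      have hre : edgeVec t h z p ℓ e = (p (h e) - p (t e)) + (z e : ℝ) • ℓ := by
        simp only [edgeVec]; abel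
      have hinner : (inner ℝ (p (h e) - p (t e)) ((z e:ℝ) • ℓ) : ℝ) = 0 := by
        rw [real_inner_smul_right, inner_sub_left, hip, hip]; ring
      have hnsq : ‖edgeVec t h z p ℓ e‖^2 = 2*s^2 + (z e:ℝ)^2 := by
        rw [hre, norm_add_sq_real, hinner, hpn _ _ (Ne.symm (hloop e)), norm_smul, hlnorm2]
        simp [Real.norm_eq_abs, mul_pow, sq_abs]
      rw [← Real.sqrt_sq (norm_nonneg _), hnsq]
  obtain ⟨q, ℓ', hl'ne, hl'norm, hedge⟩ := hreal n p ℓ hlne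
  have hl'1 : ‖ℓ'‖ = 1 := by rw [hl'norm, hlnorm]
  obtain ⟨S, hS2, hSs, hSs2, hS0⟩ :
      ∃ S : ℝ, S^2 = 2 * s^2 ∧ s ≤ S ∧ S ≤ 2*s ∧ 0 < S := by
    have hsqrt2a : 1 ≤ Real.sqrt 2 := by
      nlinarith [Real.sq_sqrt (show (0:ℝ) ≤ 2 by norm_num), Real.sqrt_nonneg 2]
    have hsqrt2b : Real.sqrt 2 ≤ 2 := by
      nlinarith [Real.sq_sqrt (show (0:ℝ) ≤ 2 by norm_num), Real.sqrt_nonneg 2]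
    refine ⟨Real.sqrt 2 * s, ?_, ?_, ?_, ?_⟩
    · rw [mul_pow, Real.sq_sqrt (by norm_num : (0:ℝ) ≤ 2)]
    · nlinarith
    · nlinarith
    · positivity
  have hsq_bounds : ∀ e : E, S ≤ Real.sqrt (2*s^2 + (z e:ℝ)^2) ∧
      Real.sqrt (2*s^2 + (z e:ℝ)^2) ≤ S + Z := by
    intro e
    constructor
    · have h1 : S^2 ≤ 2*s^2 + (z e:ℝ)^2 := by nlinarith [sq_nonneg ((z e:ℝ))]
      have h2 := Real.sqrt_le_sqrt h1
      rwa [Real.sqrt_sq hS0.le] at h2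
    · have h1 : 2*s^2 + (z e:ℝ)^2 ≤ (S + Z)^2 := by
        nlinarith [hzZ e, sq_abs ((z e:ℝ)), abs_nonneg ((z e:ℝ))]
      have h2 := Real.sqrt_le_sqrt h1
      rwa [Real.sqrt_sq (by positivity)] at h2
  have hA : ∀ i j : Fin n, i ≠ j → (S - 2*Z ≤ ‖q i - q j‖ ∧ ‖q i - q j‖ ≤ S + 2*Z) := by
    intro i j hij
    obtain ⟨e, he, -⟩ := hcomplete i j hij
    have hcases : (t e = i ∧ h e = j) ∨ (t e = j ∧ h e = i) := by
      have hti : t e ∈ ({i, j} : Set (Fin n)) := by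
        rw [← he]; exact Set.mem_insert _ _
      have hhi : h e ∈ ({i, j} : Set (Fin n)) := by
        rw [← he]; exact Set.mem_insert_iff.mpr (Or.inr rfl)
      simp only [Set.mem_insert_iff, Set.mem_singleton_iff] at hti hhi
      rcases hti with h1 | h1 <;> rcases hhi with h2 | h2
      · exact absurd (h1.trans h2.symm) (hloop e)
      · exact Or.inl ⟨h1, h2⟩
      · exact Or.inr ⟨h1, h2⟩
      · exact absurd (h1.trans h2.symm) (hloop e)
    have hkey : S - 2*Z ≤ ‖q (h e) - q (t e)‖ ∧ ‖q (h e) - q (t e)‖ ≤ S + 2*Z := by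
      have hq : q (h e) - q (t e) = edgeVec t h z q ℓ' e - (z e : ℝ) • ℓ' := by
        simp only [edgeVec]; abel
      have hn1 : ‖edgeVec t h z q ℓ' e‖ = Real.sqrt (2*s^2 + (z e:ℝ)^2) := by
        rw [hedge e, hev e]
      have hzl : ‖(z e:ℝ) • ℓ'‖ ≤ Z := by
        rw [norm_smul, hl'1, Real.norm_eq_abs, mul_one]; exact hzZ e
      have hub := norm_sub_le (edgeVec t h z q ℓ' e) ((z e:ℝ) • ℓ')
      have hlb := norm_sub_norm_le (edgeVec t h z q ℓ' e) ((z e:ℝ) • ℓ')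
      rw [hn1] at hub hlb
      obtain ⟨hb1, hb2⟩ := hsq_bounds e
      constructor
      · rw [hq]; linarith
      · rw [hq]; linarith
    rcases hcases with ⟨h1, h2⟩ | ⟨h1, h2⟩
    · constructor
      · rw [← h1, ← h2, norm_sub_rev]; exact hkey.1
      · rw [← h1, ← h2, norm_sub_rev]; exact hkey.2
    · constructor
      · rw [← h1, ← h2]; exact hkey.1
      · rw [← h1, ← h2]; exact hkey.2
  obtain ⟨Δ, hΔdef, hΔ0⟩ : ∃ D : ℝ, D = 5 * Z * S ∧ 0 ≤ D :=
    ⟨5 * Z * S, rfl, by positivity⟩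
  have hB2 : ∀ i j : Fin n, i ≠ j →
      (S^2 - Δ ≤ ‖q i - q j‖^2 ∧ ‖q i - q j‖^2 ≤ S^2 + Δ) := by
    intro i j hij
    obtain ⟨h1, h2⟩ := hA i j hij
    have hnn := norm_nonneg (q i - q j)
    have h4Z : 4 * Z ≤ S := by linarith
    have hl : (S - 2*Z)^2 ≤ ‖q i - q j‖^2 := pow_le_pow_left₀ (by linarith) h1 2
    have hu : ‖q i - q j‖^2 ≤ (S + 2*Z)^2 := pow_le_pow_left₀ hnn h2 2
    have hZS : Z * (4 * Z) ≤ Z * S := mul_le_mul_of_nonneg_left h4Z hZ0.le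
    constructor
    · rw [hΔdef]; nlinarith
    · rw [hΔdef]; nlinarith
  have hv0lt : n - 1 < n := by omega
  obtain ⟨v₀, ι, hιv0, hιinj⟩ :
      ∃ (v₀ : Fin n) (ι : Fin (n-1) → Fin n),
        (∀ i, ι i ≠ v₀) ∧ (∀ i j : Fin (n-1), i ≠ j → ι i ≠ ι j) := by
    refine ⟨⟨n-1, hv0lt⟩, fun i => ⟨i.1, by omega⟩, ?_, ?_⟩
    · intro i hi
      have h1 := i.2
      rw [Fin.ext_iff] at hi
      simp only at hi h1
      omega
    · intro i j hij hc
      rw [Fin.ext_iff] at hc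
      exact hij (Fin.ext hc)
  set u : Fin (n-1) → EuclideanSpace ℝ (Fin (n-2)) := fun i => q (ι i) - q v₀ with hudef
  have hun : ∀ i : Fin (n-1), u i = q (ι i) - q v₀ := fun i => rfl
  have hdiag : ∀ i, S^2 - Δ ≤ (inner ℝ (u i) (u i) : ℝ) := by
    intro i
    rw [real_inner_self_eq_norm_sq, hun]
    exact (hB2 (ι i) v₀ (hιv0 i)).1
  have hoff : ∀ i j, i ≠ j → |(inner ℝ (u i) (u j) : ℝ) - S^2/2| ≤ 3*Δ/2 := by
    intro i j hij
    have hsub : u i - u j = q (ι i) - q (ι j) := by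
      rw [hun, hun]; abel
    have hpol : (inner ℝ (u i) (u j) : ℝ) = (‖u i‖^2 + ‖u j‖^2 - ‖u i - u j‖^2)/2 := by
      have := norm_sub_sq_real (u i) (u j)
      linarith
    rw [hsub, hun, hun] at hpol
    have e1 := hB2 (ι i) v₀ (hιv0 i)
    have e2 := hB2 (ι j) v₀ (hιv0 j)
    have e3 := hB2 (ι i) (ι j) (hιinj i j hij)
    rw [abs_le]
    constructor
    · rw [hpol]; linarith [e1.1, e2.1, e3.2]
    · rw [hpol]; linarith [e1.2, e2.2, e3.1]
  have hbig : Δ + (3*Δ/2) * ((n-1 : ℕ) : ℝ) < S^2/2 := by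
    have hcast : ((n-1 : ℕ) : ℝ) = (n:ℝ) - 1 := by
      rw [Nat.cast_sub (by omega)]; norm_num
    rw [hcast]
    have hS' : S ≤ 48 * ((n:ℝ) * Z) := by rw [hsdef] at hSs2; linarith
    have hW : Z * S ≤ 48 * ((n:ℝ) * Z^2) := by nlinarith
    have hWn : (Z * S) * (n:ℝ) ≤ 48 * ((n:ℝ)^2 * Z^2) := by nlinarith
    have hWpos : 0 ≤ Z * S := by positivity
    have hn2Z2 : 0 < (n:ℝ)^2 * Z^2 := by positivity
    rw [hΔdef, hS2, hsdef]
    nlinarith [hWn, hWpos, hn2Z2, hn2, hZ1]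
  have li := gram_linearIndependent u S Δ hΔ0 hdiag hoff hbig
  have hcard := li.fintype_card_le_finrank
  rw [finrank_euclideanSpace_fin, Fintype.card_fin] at hcard
  omega
end

section
/- Lower bound for labelled octahedra (Corollary 6.3(ii)): Let (6, E, t, h, z) be ℤ-labelled graph data whose underlying directed multigraph is an orientation of the complete tripartite graph K_{2,2,2} with parts {0,1}, {2,3}, {4,5} of Fin 6 (no selfloops and exactly one edge e with {t e, h e} = {i, j} for each pair of vertices i, j lying in different parts, and no edges within a part), with arbitrary labels z. Then the data is not 3-realizable: there exist a dimension m and a periodic framework of the data in ℝ^m admitting no equivalent periodic framework in ℝ^3. -/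
open Filter Topology
set_option maxHeartbeats 800000

private lemma euclid_norm_sq {m : ℕ} (x : EuclideanSpace ℝ (Fin m)) : ‖x‖ ^ 2 = ∑ i, x i ^ 2 := by
  rw [← real_inner_self_eq_norm_sq]
  simp only [PiLp.inner_apply, RCLike.inner_apply, conj_trivial, sq]

/-- The vertex configuration in `ℝ⁵` (last coordinate `0`): an octahedron configuration
spanning a 4-dimensional space with vertices `0, 2, 4` collinear (`2` the midpoint). -/
private def MM : Fin 6 → Fin 5 → ℝ :=
  ![![0,0,0,0,0], ![0,1,0,0,0], ![1,0,0,0,0], ![0,0,1,0,0], ![2,0,0,0,0], ![0,0,0,1,0]]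

private noncomputable def DD : Fin 6 → Fin 6 → ℝ := fun a b => ∑ k, (MM a k - MM b k) ^ 2

private lemma MMr0 : MM 0 = ![0,0,0,0,0] := rfl
private lemma MMr1 : MM 1 = ![0,1,0,0,0] := rfl
private lemma MMr2 : MM 2 = ![1,0,0,0,0] := rfl
private lemma MMr3 : MM 3 = ![0,0,1,0,0] := rfl
private lemma MMr4 : MM 4 = ![2,0,0,0,0] := rfl
private lemma MMr5 : MM 5 = ![0,0,0,1,0] := rfl

private lemma MM4 : ∀ i, MM i 4 = 0 := by
  intro i; fin_cases i <;> norm_num [MM, Matrix.cons_val_four]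

private lemma DD_le (a b : Fin 6) : DD a b ≤ 5 := by
  fin_cases a <;> fin_cases b <;> norm_num [DD, MM, Fin.sum_univ_five, Matrix.cons_val_two, Matrix.cons_val_three, Matrix.cons_val_four, Matrix.tail_cons]

private lemma DD_symm (a b : Fin 6) : DD a b = DD b a := by
  unfold DD; apply Finset.sum_congr rfl; intros; ring

private lemma normsq_aux (ε c : ℝ) (A B : Fin 5 → ℝ) (hA : A 4 = 0) (hB : B 4 = 0) :
    ‖((WithLp.equiv 2 (Fin 5 → ℝ)).symm A + c • (WithLp.equiv 2 (Fin 5 → ℝ)).symm ![0,0,0,0,ε]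
       - (WithLp.equiv 2 (Fin 5 → ℝ)).symm B : EuclideanSpace ℝ (Fin 5))‖ ^ 2
      = (∑ k, (A k - B k)^2) + c^2 * ε^2 := by
  rw [euclid_norm_sq]
  simp only [PiLp.add_apply, PiLp.sub_apply, PiLp.smul_apply, WithLp.equiv_symm_apply, PiLp.toLp_apply,
    smul_eq_mul]
  rw [Fin.sum_univ_five, Fin.sum_univ_five]
  simp [hA, hB, Matrix.cons_val_two, Matrix.cons_val_three, Matrix.cons_val_four, Matrix.tail_cons]
  ring

private lemma lnorm (ε : ℝ) (hε : 0 ≤ ε) :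
    ‖((WithLp.equiv 2 (Fin 5 → ℝ)).symm ![0,0,0,0,ε] : EuclideanSpace ℝ (Fin 5))‖ = ε := by
  have h2 : ‖((WithLp.equiv 2 (Fin 5 → ℝ)).symm ![0,0,0,0,ε] : EuclideanSpace ℝ (Fin 5))‖^2
      = ε^2 := by
    rw [euclid_norm_sq, Fin.sum_univ_five]
    norm_num [WithLp.equiv_symm_apply, PiLp.toLp_apply, Matrix.cons_val_two, Matrix.cons_val_three, Matrix.cons_val_four, Matrix.tail_cons]
  have h3 := norm_nonneg ((WithLp.equiv 2 (Fin 5 → ℝ)).symm ![0,0,0,0,ε] : EuclideanSpace ℝ (Fin 5))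
  nlinarith [h2, h3, hε]

private lemma pair_of_set {a b i j : Fin 6} (hij : i ≠ j)
    (hs : ({a, b} : Set (Fin 6)) = {i, j}) : (a = i ∧ b = j) ∨ (a = j ∧ b = i) := by
  have ha : a ∈ ({i,j} : Set (Fin 6)) := by rw [← hs]; simp
  have hb : b ∈ ({i,j} : Set (Fin 6)) := by rw [← hs]; simp
  have hi : i ∈ ({a,b} : Set (Fin 6)) := by rw [hs]; simp
  have hj : j ∈ ({a,b} : Set (Fin 6)) := by rw [hs]; simp
  simp only [Set.mem_insert_iff, Set.mem_singleton_iff] at ha hb hi hj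
  rcases ha with rfl|rfl <;> rcases hb with rfl|rfl <;> tauto

private lemma expand_smul (a b : EuclideanSpace ℝ (Fin 3)) (c : ℝ) :
    ‖a - c • b‖^2 = ‖a‖^2 - 2*c*(inner ℝ a b : ℝ) + c^2*‖b‖^2 := by
  rw [norm_sub_sq_real, real_inner_smul_right, norm_smul, Real.norm_eq_abs, mul_pow, sq_abs]
  ring

private lemma four_orthonormal (w1 w2 w3 w4 : EuclideanSpace ℝ (Fin 3))
    (k1 : (inner ℝ w1 w1 : ℝ) = 1) (k2 : (inner ℝ w2 w2 : ℝ) = 1)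
    (k3 : (inner ℝ w3 w3 : ℝ) = 1) (k4 : (inner ℝ w4 w4 : ℝ) = 1)
    (k12 : (inner ℝ w1 w2 : ℝ) = 0) (k13 : (inner ℝ w1 w3 : ℝ) = 0)
    (k14 : (inner ℝ w1 w4 : ℝ) = 0) (k23 : (inner ℝ w2 w3 : ℝ) = 0)
    (k24 : (inner ℝ w2 w4 : ℝ) = 0) (k34 : (inner ℝ w3 w4 : ℝ) = 0) : False := by
  have k21 : (inner ℝ w2 w1 : ℝ) = 0 := by rw [real_inner_comm]; exact k12
  have k31 : (inner ℝ w3 w1 : ℝ) = 0 := by rw [real_inner_comm]; exact k13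
  have k41 : (inner ℝ w4 w1 : ℝ) = 0 := by rw [real_inner_comm]; exact k14
  have k32 : (inner ℝ w3 w2 : ℝ) = 0 := by rw [real_inner_comm]; exact k23
  have k42 : (inner ℝ w4 w2 : ℝ) = 0 := by rw [real_inner_comm]; exact k24
  have k43 : (inner ℝ w4 w3 : ℝ) = 0 := by rw [real_inner_comm]; exact k34
  set w : Fin 4 → EuclideanSpace ℝ (Fin 3) := ![w1, w2, w3, w4] with hw
  have hn : ∀ i, (inner ℝ (w i) (w i) : ℝ) = 1 := by
    intro i
    fin_cases i <;>
      simp only [hw, Matrix.cons_val_zero, Matrix.cons_val_one, Matrix.head_cons,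
        Matrix.cons_val_two, Matrix.tail_cons, Matrix.cons_val_three, Fin.isValue] <;>
      first | exact k1 | exact k2 | exact k3 | exact k4
  have ho : ∀ i j, i ≠ j → (inner ℝ (w i) (w j) : ℝ) = 0 := by
    intro i j hij
    fin_cases i <;> fin_cases j <;> (try exact absurd rfl hij) <;>
      simp only [hw, Matrix.cons_val_zero, Matrix.cons_val_one, Matrix.head_cons,
        Matrix.cons_val_two, Matrix.tail_cons, Matrix.cons_val_three, Fin.isValue] <;>
      first | exact k12 | exact k13 | exact k14 | exact k23 | exact k24 | exact k34 |
        exact k21 | exact k31 | exact k41 | exact k32 | exact k42 | exact k43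
  have hdep : ¬ LinearIndependent ℝ w := by
    intro hli
    have hc := hli.fintype_card_le_finrank
    rw [finrank_euclideanSpace_fin] at hc
    simp at hc
  obtain ⟨g, hg0, i, hgi⟩ := Fintype.not_linearIndependent_iff.mp hdep
  have hinner : (inner ℝ (∑ j : Fin 4, g j • w j) (∑ j : Fin 4, g j • w j) : ℝ) = 0 := by
    rw [hg0]; exact inner_zero_left _
  rw [sum_inner] at hinner
  simp only [inner_sum, real_inner_smul_left, real_inner_smul_right] at hinner
  have hexp : ∀ j : Fin 4, ∑ k : Fin 4, g k * (g j * (inner ℝ (w j) (w k) : ℝ)) = g j ^ 2 := by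
    intro j
    rw [Finset.sum_eq_single j]
    · rw [hn j]; ring
    · intro k _ hk; rw [ho j k (Ne.symm hk)]; ring
    · intro hj; exact absurd (Finset.mem_univ j) hj
  rw [show (∑ j : Fin 4, ∑ k : Fin 4, g k * (g j * (inner ℝ (w j) (w k) : ℝ)))
      = ∑ j : Fin 4, g j ^ 2 from Finset.sum_congr rfl (fun j _ => hexp j)] at hinner
  have h0 := (Finset.sum_eq_zero_iff_of_nonneg (fun j _ => sq_nonneg (g j))).mp hinner i
    (Finset.mem_univ i)
  exact hgi ((pow_eq_zero_iff two_ne_zero).mp h0)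

private lemma final_contradiction (Q : Fin 6 → EuclideanSpace ℝ (Fin 3))
    (h02 : ‖Q 0 - Q 2‖^2 = 1) (h03 : ‖Q 0 - Q 3‖^2 = 1) (h04 : ‖Q 0 - Q 4‖^2 = 4)
    (h05 : ‖Q 0 - Q 5‖^2 = 1) (h12 : ‖Q 1 - Q 2‖^2 = 2) (h13 : ‖Q 1 - Q 3‖^2 = 2)
    (h14 : ‖Q 1 - Q 4‖^2 = 5) (h15 : ‖Q 1 - Q 5‖^2 = 2) (h24 : ‖Q 2 - Q 4‖^2 = 1)
    (h25 : ‖Q 2 - Q 5‖^2 = 2) (h34 : ‖Q 3 - Q 4‖^2 = 5) (h35 : ‖Q 3 - Q 5‖^2 = 2) : False := by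
  set v : Fin 6 → EuclideanSpace ℝ (Fin 3) := fun i => Q i - Q 0 with hv
  have hQd : ∀ i j : Fin 6, Q i - Q j = v i - v j := by intro i j; simp [hv]
  rw [hQd] at h02 h03 h04 h05 h12 h13 h14 h15 h24 h25 h34 h35
  have hv0 : v 0 = 0 := by simp [hv]
  rw [hv0, zero_sub, norm_neg] at h02 h03 h04 h05
  have X24 : ‖v 2 - v 4‖^2 = ‖v 2‖^2 - 2*(inner ℝ (v 2) (v 4) : ℝ) + ‖v 4‖^2 := norm_sub_sq_real _ _
  have a24 : (inner ℝ (v 2) (v 4) : ℝ) = 2 := by linarith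
  have hmid : v 4 = (2:ℝ) • v 2 := by
    have h0 : ‖v 4 - (2:ℝ) • v 2‖^2 = 0 := by
      rw [expand_smul]
      rw [real_inner_comm] at a24
      nlinarith [h04, h02, a24]
    have h1 : ‖v 4 - (2:ℝ) • v 2‖ = 0 := (pow_eq_zero_iff two_ne_zero).mp h0
    exact sub_eq_zero.mp (norm_eq_zero.mp h1)
  rw [hmid] at h14 h34
  have X14 : ‖v 1 - (2:ℝ) • v 2‖^2 = ‖v 1‖^2 - 2*2*(inner ℝ (v 1) (v 2) : ℝ) + 2^2*‖v 2‖^2 :=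
    expand_smul _ _ _
  have X34 : ‖v 3 - (2:ℝ) • v 2‖^2 = ‖v 3‖^2 - 2*2*(inner ℝ (v 3) (v 2) : ℝ) + 2^2*‖v 2‖^2 :=
    expand_smul _ _ _
  have X12 : ‖v 1 - v 2‖^2 = ‖v 1‖^2 - 2*(inner ℝ (v 1) (v 2) : ℝ) + ‖v 2‖^2 := norm_sub_sq_real _ _
  have X13 : ‖v 1 - v 3‖^2 = ‖v 1‖^2 - 2*(inner ℝ (v 1) (v 3) : ℝ) + ‖v 3‖^2 := norm_sub_sq_real _ _
  have X15 : ‖v 1 - v 5‖^2 = ‖v 1‖^2 - 2*(inner ℝ (v 1) (v 5) : ℝ) + ‖v 5‖^2 := norm_sub_sq_real _ _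
  have X25 : ‖v 2 - v 5‖^2 = ‖v 2‖^2 - 2*(inner ℝ (v 2) (v 5) : ℝ) + ‖v 5‖^2 := norm_sub_sq_real _ _
  have X35 : ‖v 3 - v 5‖^2 = ‖v 3‖^2 - 2*(inner ℝ (v 3) (v 5) : ℝ) + ‖v 5‖^2 := norm_sub_sq_real _ _
  have a12 : (inner ℝ (v 1) (v 2) : ℝ) = 0 := by
    have e1 : ‖v 1‖^2 - 2*(inner ℝ (v 1) (v 2) : ℝ) = 1 := by linarith
    have e2 : ‖v 1‖^2 - 4*(inner ℝ (v 1) (v 2) : ℝ) = 1 := by linarith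
    linarith
  have n1 : ‖v 1‖^2 = 1 := by linarith
  have a13 : (inner ℝ (v 1) (v 3) : ℝ) = 0 := by linarith
  have a15 : (inner ℝ (v 1) (v 5) : ℝ) = 0 := by linarith
  have a25 : (inner ℝ (v 2) (v 5) : ℝ) = 0 := by linarith
  have a23 : (inner ℝ (v 3) (v 2) : ℝ) = 0 := by linarith
  have a35 : (inner ℝ (v 3) (v 5) : ℝ) = 0 := by linarith
  have a23' : (inner ℝ (v 2) (v 3) : ℝ) = 0 := by rw [real_inner_comm]; exact a23
  have s1 : (inner ℝ (v 1) (v 1) : ℝ) = 1 := by rw [real_inner_self_eq_norm_sq]; exact n1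
  have s2 : (inner ℝ (v 2) (v 2) : ℝ) = 1 := by rw [real_inner_self_eq_norm_sq]; exact h02
  have s3 : (inner ℝ (v 3) (v 3) : ℝ) = 1 := by rw [real_inner_self_eq_norm_sq]; exact h03
  have s5 : (inner ℝ (v 5) (v 5) : ℝ) = 1 := by rw [real_inner_self_eq_norm_sq]; exact h05
  exact four_orthonormal (v 1) (v 2) (v 3) (v 5) s1 s2 s3 s5 a12 a13 a15 a23' a25 a35

/-- Corollary 6.3(ii): ℤ-labelled graph data whose underlying directed multigraph is an
orientation of the complete tripartite graph `K_{2,2,2}` with parts `{0,1}`, `{2,3}`,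
`{4,5}` of `Fin 6` (no selfloops nor edges within a part, exactly one edge between each
pair of vertices in different parts), with arbitrary labels, is not `3`-realizable. -/
theorem labelled_octahedron_not_realizable (E : Type*) [Fintype E]
    (t h : E → Fin 6) (z : E → ℤ)
    (hpart : ∀ e : E, (t e : ℕ) / 2 ≠ (h e : ℕ) / 2)
    (hcomplete : ∀ i j : Fin 6, (i : ℕ) / 2 ≠ (j : ℕ) / 2 →
      ∃! e : E, ({t e, h e} : Set (Fin 6)) = {i, j}) :
    ¬ IsRealizable (Fin 6) E t h z 3 := by
  classical
  intro hreal
  set pp : Fin 6 → EuclideanSpace ℝ (Fin 5) :=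
    fun i => (WithLp.equiv 2 (Fin 5 → ℝ)).symm (MM i) with hpp
  have hεpos : ∀ n : ℕ, (0:ℝ) < 1/((n:ℝ)+1) := fun n => by positivity
  have H : ∀ n : ℕ, ∃ (q : Fin 6 → EuclideanSpace ℝ (Fin 3))
      (ℓ' : EuclideanSpace ℝ (Fin 3)),
      ℓ' ≠ 0 ∧
      ‖ℓ'‖ = ‖((WithLp.equiv 2 (Fin 5 → ℝ)).symm ![0,0,0,0,1/((n:ℝ)+1)] :
        EuclideanSpace ℝ (Fin 5))‖ ∧
      ∀ e, ‖edgeVec t h z q ℓ' e‖ =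
        ‖edgeVec t h z pp ((WithLp.equiv 2 (Fin 5 → ℝ)).symm ![0,0,0,0,1/((n:ℝ)+1)]) e‖ := by
    intro n
    refine hreal 5 pp _ ?_
    rw [← norm_ne_zero_iff, lnorm _ (hεpos n).le]
    exact (hεpos n).ne'
  choose q ℓ' hℓ'ne hℓ'norm hEdge using H
  have hℓ'n : ∀ n, ‖ℓ' n‖ = 1/((n:ℝ)+1) := fun n => by
    rw [hℓ'norm n, lnorm _ (hεpos n).le]
  set Qn : ℕ → Fin 6 → EuclideanSpace ℝ (Fin 3) := fun n i => q n i - q n 0 with hQn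
  have hEdgeQ : ∀ n e, ‖Qn n (h e) + (z e : ℝ) • ℓ' n - Qn n (t e)‖ ^ 2
      = DD (t e) (h e) + (z e:ℝ)^2 * (1/((n:ℝ)+1))^2 := by
    intro n e
    have h1 : Qn n (h e) + (z e:ℝ) • ℓ' n - Qn n (t e)
        = edgeVec t h z (q n) (ℓ' n) e := by
      simp only [hQn, edgeVec]; abel
    rw [h1, hEdge n e]
    have h2 := normsq_aux (1/((n:ℝ)+1)) ((z e : ℝ)) (MM (h e)) (MM (t e)) (MM4 _) (MM4 _)
    simp only [edgeVec, hpp]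
    rw [DD_symm]
    unfold DD
    exact h2
  -- uniform bound on the labels
  set Z : ℝ := ((Finset.univ.sup fun e : E => (z e).natAbs : ℕ) : ℝ) with hZdef
  have hZ : ∀ e, |(z e : ℝ)| ≤ Z := by
    intro e
    have h0 : (z e).natAbs ≤ Finset.univ.sup fun e => (z e).natAbs :=
      Finset.le_sup (f := fun e => (z e).natAbs) (Finset.mem_univ e)
    have h1 : (((z e).natAbs : ℕ) : ℝ) ≤ Z := by rw [hZdef]; exact_mod_cast h0
    calc |(z e : ℝ)| = (((z e).natAbs : ℕ) : ℝ) := by rw [Nat.cast_natAbs, Int.cast_abs]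
      _ ≤ Z := h1
  have hZ0 : (0:ℝ) ≤ Z := Nat.cast_nonneg _
  -- uniform bound on edge differences
  have hQdiff : ∀ n e, ‖Qn n (h e) - Qn n (t e)‖ ≤ 3 + 2*Z := by
    intro n e
    have hw := hEdgeQ n e
    have hε1 : 1/((n:ℝ)+1) ≤ 1 := by
      rw [div_le_one (by positivity)]
      have : (0:ℝ) ≤ n := Nat.cast_nonneg n
      linarith
    have hz2 : (z e:ℝ)^2 ≤ Z^2 := by
      have h1 := hZ e
      nlinarith [abs_nonneg (z e : ℝ), sq_abs (z e : ℝ)]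
    have hε2 : (1/((n:ℝ)+1))^2 ≤ 1 := by nlinarith [hεpos n]
    have hzz : (z e:ℝ)^2 * (1/((n:ℝ)+1))^2 ≤ Z^2 := by
      nlinarith [sq_nonneg ((z e:ℝ)), sq_nonneg (1/((n:ℝ)+1))]
    have hwsq : ‖Qn n (h e) + (z e:ℝ) • ℓ' n - Qn n (t e)‖^2 ≤ 5 + Z^2 := by
      rw [hw]
      have h5 := DD_le (t e) (h e)
      linarith
    have hwle : ‖Qn n (h e) + (z e:ℝ) • ℓ' n - Qn n (t e)‖ ≤ 3 + Z := by
      nlinarith [norm_nonneg (Qn n (h e) + (z e:ℝ) • ℓ' n - Qn n (t e)), hZ0]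
    have hrw : Qn n (h e) - Qn n (t e)
        = (Qn n (h e) + (z e:ℝ) • ℓ' n - Qn n (t e)) - (z e:ℝ) • ℓ' n := by abel
    rw [hrw]
    have htri := norm_sub_le (Qn n (h e) + (z e:ℝ) • ℓ' n - Qn n (t e)) ((z e:ℝ) • ℓ' n)
    have hsm : ‖(z e:ℝ) • ℓ' n‖ ≤ Z := by
      rw [norm_smul, Real.norm_eq_abs, hℓ'n n]
      have h1 := hZ e
      nlinarith [abs_nonneg ((z e:ℝ)), hεpos n]
    linarith
  have hpairb : ∀ n, ∀ i j : Fin 6, (i:ℕ)/2 ≠ (j:ℕ)/2 → ‖Qn n i - Qn n j‖ ≤ 3 + 2*Z := by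
    intro n i j hij
    obtain ⟨e, he⟩ := (hcomplete i j hij).exists
    have hij' : i ≠ j := fun hh => hij (by rw [hh])
    rcases pair_of_set hij' he with ⟨h1,h2⟩|⟨h1,h2⟩
    · rw [show Qn n i - Qn n j = -(Qn n (h e) - Qn n (t e)) by rw [h1,h2]; abel, norm_neg]
      exact hQdiff n e
    · rw [show Qn n i - Qn n j = Qn n (h e) - Qn n (t e) by rw [h1,h2]]
      exact hQdiff n e
  have hQ0 : ∀ n, Qn n 0 = (0 : EuclideanSpace ℝ (Fin 3)) := fun n => sub_self _
  have hvert : ∀ n, ∀ i : Fin 6, ‖Qn n i‖ ≤ 6 + 4*Z := by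
    intro n i
    have key : ∀ j : Fin 6, (j:ℕ)/2 ≠ 0 → ‖Qn n j‖ ≤ 3 + 2*Z := by
      intro j hj
      have := hpairb n j 0 (by simpa using hj)
      rwa [hQ0, sub_zero] at this
    have b2 : ‖Qn n 2‖ ≤ 3 + 2*Z := key 2 (by decide)
    have b3 : ‖Qn n 3‖ ≤ 3 + 2*Z := key 3 (by decide)
    have b4 : ‖Qn n 4‖ ≤ 3 + 2*Z := key 4 (by decide)
    have b5 : ‖Qn n 5‖ ≤ 3 + 2*Z := key 5 (by decide)
    have b0 : ‖Qn n 0‖ ≤ 6 + 4*Z := by rw [hQ0, norm_zero]; linarith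
    have b1 : ‖Qn n 1‖ ≤ 6 + 4*Z := by
      have h12 := hpairb n 1 2 (by decide)
      calc ‖Qn n 1‖ = ‖(Qn n 1 - Qn n 2) + Qn n 2‖ := by rw [sub_add_cancel]
        _ ≤ ‖Qn n 1 - Qn n 2‖ + ‖Qn n 2‖ := norm_add_le _ _
        _ ≤ 6 + 4*Z := by linarith
    fin_cases i
    · exact b0
    · exact b1
    · exact le_trans b2 (by linarith)
    · exact le_trans b3 (by linarith)
    · exact le_trans b4 (by linarith)
    · exact le_trans b5 (by linarith)
  have hmem : ∀ n, Qn n ∈ Metric.closedBall (0 : Fin 6 → EuclideanSpace ℝ (Fin 3)) (6+4*Z) := by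
    intro n
    rw [Metric.mem_closedBall, dist_zero_right]
    refine (pi_norm_le_iff_of_nonneg (by linarith)).mpr ?_
    intro i; exact hvert n i
  obtain ⟨Qlim, -, φ, hφ, hconv⟩ :=
    tendsto_subseq_of_bounded Metric.isBounded_closedBall hmem
  have hmono : ∀ k : ℕ, (k:ℝ) + 1 ≤ (φ k : ℝ) + 1 := by
    intro k
    have h1 : k ≤ φ k := hφ.le_apply
    have : (k:ℝ) ≤ (φ k : ℝ) := by exact_mod_cast h1
    linarith
  have hseq0 : Tendsto (fun k : ℕ => 1/((φ k:ℝ)+1)) atTop (𝓝 0) := by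
    refine squeeze_zero (fun k => by positivity) (fun k => ?_)
      tendsto_one_div_add_atTop_nhds_zero_nat
    exact one_div_le_one_div_of_le (by positivity) (hmono k)
  have hℓ0 : Tendsto (fun k => ℓ' (φ k)) atTop (𝓝 (0 : EuclideanSpace ℝ (Fin 3))) := by
    refine squeeze_zero_norm (fun k => ?_) hseq0
    rw [hℓ'n (φ k)]
  have hQi : ∀ i, Tendsto (fun k => Qn (φ k) i) atTop (𝓝 (Qlim i)) := by
    intro i
    exact (tendsto_pi_nhds.mp hconv) i
  have hlim : ∀ e, ‖Qlim (h e) - Qlim (t e)‖^2 = DD (t e) (h e) := by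
    intro e
    have T1 : Tendsto (fun k => ‖Qn (φ k) (h e) + (z e:ℝ) • ℓ' (φ k) - Qn (φ k) (t e)‖^2)
        atTop (𝓝 (‖Qlim (h e) + (z e:ℝ) • (0 : EuclideanSpace ℝ (Fin 3)) - Qlim (t e)‖^2)) :=
      ((((hQi (h e)).add (hℓ0.const_smul ((z e:ℝ)))).sub (hQi (t e))).norm.pow 2)
    have hp2 : Tendsto (fun k : ℕ => (1/((φ k:ℝ)+1))^2) atTop (𝓝 ((0:ℝ)^2)) := hseq0.pow 2
    have hp2' : Tendsto (fun k : ℕ => (1/((φ k:ℝ)+1))^2) atTop (𝓝 (0:ℝ)) := by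
      rw [show ((0:ℝ))^2 = 0 by norm_num] at hp2; exact hp2
    have T2 : Tendsto (fun k => DD (t e) (h e) + (z e:ℝ)^2 * (1/((φ k:ℝ)+1))^2)
        atTop (𝓝 (DD (t e) (h e) + (z e:ℝ)^2 * 0)) :=
      tendsto_const_nhds.add (tendsto_const_nhds.mul hp2')
    have heq : (fun k => ‖Qn (φ k) (h e) + (z e:ℝ) • ℓ' (φ k) - Qn (φ k) (t e)‖^2)
        = fun k => DD (t e) (h e) + (z e:ℝ)^2 * (1/((φ k:ℝ)+1))^2 :=
      funext fun k => hEdgeQ (φ k) e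
    rw [heq] at T1
    have huniq := tendsto_nhds_unique T1 T2
    rw [smul_zero, add_zero] at huniq
    rw [huniq]; ring
  have hdist : ∀ i j : Fin 6, (i:ℕ)/2 ≠ (j:ℕ)/2 → ‖Qlim i - Qlim j‖^2 = DD i j := by
    intro i j hij
    obtain ⟨e, he⟩ := (hcomplete i j hij).exists
    have hij' : i ≠ j := fun hh => hij (by rw [hh])
    rcases pair_of_set hij' he with ⟨h1,h2⟩|⟨h1,h2⟩
    · have h3 := hlim e; rw [h1, h2] at h3
      rw [show Qlim i - Qlim j = -(Qlim j - Qlim i) by abel, norm_neg]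
      exact h3
    · have h3 := hlim e; rw [h1, h2] at h3
      rw [DD_symm]
      exact h3
  have d02 : ‖Qlim 0 - Qlim 2‖^2 = 1 := by
    have hh := hdist 0 2 (by decide)
    rwa [show DD 0 2 = 1 by norm_num [DD, Fin.sum_univ_five, MMr0, MMr2, Matrix.cons_val_two, Matrix.cons_val_three, Matrix.cons_val_four, Matrix.tail_cons]] at hh
  have d03 : ‖Qlim 0 - Qlim 3‖^2 = 1 := by
    have hh := hdist 0 3 (by decide)
    rwa [show DD 0 3 = 1 by norm_num [DD, Fin.sum_univ_five, MMr0, MMr3, Matrix.cons_val_two, Matrix.cons_val_three, Matrix.cons_val_four, Matrix.tail_cons]] at hh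
  have d04 : ‖Qlim 0 - Qlim 4‖^2 = 4 := by
    have hh := hdist 0 4 (by decide)
    rwa [show DD 0 4 = 4 by norm_num [DD, Fin.sum_univ_five, MMr0, MMr4, Matrix.cons_val_two, Matrix.cons_val_three, Matrix.cons_val_four, Matrix.tail_cons]] at hh
  have d05 : ‖Qlim 0 - Qlim 5‖^2 = 1 := by
    have hh := hdist 0 5 (by decide)
    rwa [show DD 0 5 = 1 by norm_num [DD, Fin.sum_univ_five, MMr0, MMr5, Matrix.cons_val_two, Matrix.cons_val_three, Matrix.cons_val_four, Matrix.tail_cons]] at hh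
  have d12 : ‖Qlim 1 - Qlim 2‖^2 = 2 := by
    have hh := hdist 1 2 (by decide)
    rwa [show DD 1 2 = 2 by norm_num [DD, Fin.sum_univ_five, MMr1, MMr2, Matrix.cons_val_two, Matrix.cons_val_three, Matrix.cons_val_four, Matrix.tail_cons]] at hh
  have d13 : ‖Qlim 1 - Qlim 3‖^2 = 2 := by
    have hh := hdist 1 3 (by decide)
    rwa [show DD 1 3 = 2 by norm_num [DD, Fin.sum_univ_five, MMr1, MMr3, Matrix.cons_val_two, Matrix.cons_val_three, Matrix.cons_val_four, Matrix.tail_cons]] at hh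
  have d14 : ‖Qlim 1 - Qlim 4‖^2 = 5 := by
    have hh := hdist 1 4 (by decide)
    rwa [show DD 1 4 = 5 by norm_num [DD, Fin.sum_univ_five, MMr1, MMr4, Matrix.cons_val_two, Matrix.cons_val_three, Matrix.cons_val_four, Matrix.tail_cons]] at hh
  have d15 : ‖Qlim 1 - Qlim 5‖^2 = 2 := by
    have hh := hdist 1 5 (by decide)
    rwa [show DD 1 5 = 2 by norm_num [DD, Fin.sum_univ_five, MMr1, MMr5, Matrix.cons_val_two, Matrix.cons_val_three, Matrix.cons_val_four, Matrix.tail_cons]] at hh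
  have d24 : ‖Qlim 2 - Qlim 4‖^2 = 1 := by
    have hh := hdist 2 4 (by decide)
    rwa [show DD 2 4 = 1 by norm_num [DD, Fin.sum_univ_five, MMr2, MMr4, Matrix.cons_val_two, Matrix.cons_val_three, Matrix.cons_val_four, Matrix.tail_cons]] at hh
  have d25 : ‖Qlim 2 - Qlim 5‖^2 = 2 := by
    have hh := hdist 2 5 (by decide)
    rwa [show DD 2 5 = 2 by norm_num [DD, Fin.sum_univ_five, MMr2, MMr5, Matrix.cons_val_two, Matrix.cons_val_three, Matrix.cons_val_four, Matrix.tail_cons]] at hh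
  have d34 : ‖Qlim 3 - Qlim 4‖^2 = 5 := by
    have hh := hdist 3 4 (by decide)
    rwa [show DD 3 4 = 5 by norm_num [DD, Fin.sum_univ_five, MMr3, MMr4, Matrix.cons_val_two, Matrix.cons_val_three, Matrix.cons_val_four, Matrix.tail_cons]] at hh
  have d35 : ‖Qlim 3 - Qlim 5‖^2 = 2 := by
    have hh := hdist 3 5 (by decide)
    rwa [show DD 3 5 = 2 by norm_num [DD, Fin.sum_univ_five, MMr3, MMr5, Matrix.cons_val_two, Matrix.cons_val_three, Matrix.cons_val_four, Matrix.tail_cons]] at hh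
  exact final_contradiction Qlim d02 d03 d04 d05 d12 d13 d14 d15 d24 d25 d34 d35
end

section
/- Balanced k-sums preserve realizable dimension (Lemma 7.1): Let (n, E, t, h, z) be ℤ-labelled graph data. Suppose there are V₁, V₂ ⊆ Fin n with V₁ ∪ V₂ = Fin n and E₁, E₂ ⊆ E with E₁ ∪ E₂ = E such that: every edge of E₁ has both endpoints in V₁ and label 0; every edge of E₂ has both endpoints in V₂; and E₁ ∩ E₂ consists of edges with both endpoints in V₁ ∩ V₂, with exactly one edge e of E₁ ∩ E₂ satisfying {t e, h e} = {i, j} for each pair of distinct i, j ∈ V₁ ∩ V₂, each such edge having label 0, and E₁ ∩ E₂ containing no selfloops. Then for every d, the data (n, E, t, h, z) is d-realizable if and only if both the restricted data on (V₁, E₁) and the restricted data on (V₂, E₂) are d-realizable. -/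
set_option maxHeartbeats 1000000

open RealInnerProductSpace

/-- Linear combination map of a finite family of vectors. -/
noncomputable def comboMap {d : ℕ} {ι : Type*} [Fintype ι]
    (w : ι → EuclideanSpace ℝ (Fin d)) : (ι → ℝ) →ₗ[ℝ] EuclideanSpace ℝ (Fin d) where
  toFun := fun c => ∑ i, c i • w i
  map_add' := by intro a b; simp [add_smul, Finset.sum_add_distrib]
  map_smul' := by intro r a; simp [smul_smul, Finset.smul_sum]

lemma comboMap_apply {d : ℕ} {ι : Type*} [Fintype ι]
    (w : ι → EuclideanSpace ℝ (Fin d)) (c : ι → ℝ) :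
    comboMap w c = ∑ i, c i • w i := rfl

lemma comboMap_single {d : ℕ} {ι : Type*} [Fintype ι] [DecidableEq ι]
    (w : ι → EuclideanSpace ℝ (Fin d)) (i : ι) :
    comboMap w (Pi.single i 1) = w i := by
  rw [comboMap_apply]
  simp [Pi.single_apply, ite_smul]

lemma comboMap_inner {d : ℕ} {ι : Type*} [Fintype ι]
    (w : ι → EuclideanSpace ℝ (Fin d)) (c c' : ι → ℝ) :
    ⟪comboMap w c, comboMap w c'⟫ = ∑ i, ∑ j, c i * c' j * ⟪w i, w j⟫ := by
  rw [comboMap_apply, comboMap_apply, sum_inner]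
  refine Finset.sum_congr rfl fun i _ => ?_
  rw [inner_sum]
  refine Finset.sum_congr rfl fun j _ => ?_
  rw [real_inner_smul_left, real_inner_smul_right]; ring

/-- Gram-matrix matching families of vectors are related by a linear isometry. -/
lemma exists_linearIsometry_of_inner {d : ℕ} {ι : Type*} [Fintype ι]
    (u v : ι → EuclideanSpace ℝ (Fin d))
    (huv : ∀ i j, ⟪u i, u j⟫ = ⟪v i, v j⟫) :
    ∃ f : EuclideanSpace ℝ (Fin d) →ₗᵢ[ℝ] EuclideanSpace ℝ (Fin d), ∀ i, f (u i) = v i := by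
  classical
  set A := comboMap u with hA
  set B := comboMap v with hB
  have key : ∀ c c', ⟪A c, A c'⟫ = ⟪B c, B c'⟫ := by
    intro c c'
    rw [hA, hB, comboMap_inner, comboMap_inner]
    exact Finset.sum_congr rfl fun i _ => Finset.sum_congr rfl fun j _ => by rw [huv]
  have hker : LinearMap.ker A ≤ LinearMap.ker B := by
    intro c hc
    rw [LinearMap.mem_ker] at hc ⊢
    have : ⟪B c, B c⟫ = 0 := by rw [← key, hc, inner_zero_left]
    exact inner_self_eq_zero.mp this
  set L : (LinearMap.range A) →ₗ[ℝ] EuclideanSpace ℝ (Fin d) :=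
    ((LinearMap.ker A).liftQ B hker).comp A.quotKerEquivRange.symm.toLinearMap with hL
  have hLA : ∀ c, L ⟨A c, LinearMap.mem_range_self A c⟩ = B c := by
    intro c
    rw [hL]
    simp only [LinearMap.comp_apply, LinearEquiv.coe_toLinearMap]
    rw [A.quotKerEquivRange_symm_apply_image c (LinearMap.mem_range_self A c)]
    rfl
  have hLinner : ∀ x y : LinearMap.range A, ⟪L x, L y⟫ = ⟪x, y⟫ := by
    rintro ⟨x, hx⟩ ⟨y, hy⟩
    obtain ⟨c, rfl⟩ := hx
    obtain ⟨c', rfl⟩ := hy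
    rw [hLA, hLA, ← key]
    rfl
  set fS : (LinearMap.range A) →ₗᵢ[ℝ] EuclideanSpace ℝ (Fin d) :=
    L.isometryOfInner hLinner with hfS
  refine ⟨fS.extend, fun i => ?_⟩
  have hu : u i ∈ LinearMap.range A := ⟨Pi.single i 1, by rw [hA]; exact comboMap_single u i⟩
  have h2 : fS.extend (u i) = fS ⟨u i, hu⟩ := by
    have := fS.extend_apply ⟨u i, hu⟩
    simpa using this
  rw [h2, hfS]
  have h3 : L ⟨u i, hu⟩ = v i := by
    have h1 : (⟨u i, hu⟩ : LinearMap.range A) =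
        ⟨A (Pi.single i 1), LinearMap.mem_range_self A _⟩ := by
      exact Subtype.ext (comboMap_single u i).symm
    rw [h1, hLA, hB]; exact comboMap_single v i
  simpa using h3

/-- Distance-matching finite families of points are related by an isometry. -/
lemma exists_isometry_of_dist {d : ℕ} {ι : Type*} [Finite ι]
    (u v : ι → EuclideanSpace ℝ (Fin d))
    (huv : ∀ i j, ‖u i - u j‖ = ‖v i - v j‖) :
    ∃ (f : EuclideanSpace ℝ (Fin d) →ₗᵢ[ℝ] EuclideanSpace ℝ (Fin d))
      (c : EuclideanSpace ℝ (Fin d)), ∀ i, f (u i) + c = v i := by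
  classical
  cases nonempty_fintype ι
  rcases isEmpty_or_nonempty ι with hι | hι
  · exact ⟨LinearIsometry.id, 0, fun i => (IsEmpty.false i).elim⟩
  · obtain ⟨i₀⟩ := hι
    set u' : ι → EuclideanSpace ℝ (Fin d) := fun i => u i - u i₀ with hu'
    set v' : ι → EuclideanSpace ℝ (Fin d) := fun i => v i - v i₀ with hv'
    have hnorm : ∀ i, ‖u' i‖ = ‖v' i‖ := fun i => huv i i₀
    have hnorms : ∀ i j, ‖u' i - u' j‖ = ‖v' i - v' j‖ := by
      intro i j
      rw [hu', hv']
      simp only [sub_sub_sub_cancel_right]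
      exact huv i j
    have hinner : ∀ i j, ⟪u' i, u' j⟫ = ⟪v' i, v' j⟫ := by
      intro i j
      have h1 := norm_sub_sq_real (u' i) (u' j)
      have h2 := norm_sub_sq_real (v' i) (v' j)
      rw [hnorms i j, hnorm i, hnorm j] at h1
      nlinarith [h1, h2]
    obtain ⟨f, hf⟩ := exists_linearIsometry_of_inner u' v' hinner
    refine ⟨f, v i₀ - f (u i₀), fun i => ?_⟩
    have h4 : f (u i) - f (u i₀) = v i - v i₀ := by
      have := hf i
      rwa [hu', hv', map_sub] at this
    have h5 : f (u i) + (v i₀ - f (u i₀)) = (f (u i) - f (u i₀)) + v i₀ := by abel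
    rw [h5, h4]; abel



/-- Lemma 7.1: a balanced `k`-sum preserves realizable dimension.  Suppose the data
`(n, E, t, h, z)` is the union of data on `(V₁, E₁)` (with all labels `0`) and data on
`(V₂, E₂)`, whose intersection is a balanced complete graph on `V₁ ∩ V₂` (exactly one
edge of `E₁ ∩ E₂`, of label `0` and not a selfloop, between each pair of distinct
vertices of `V₁ ∩ V₂`, and all edges of `E₁ ∩ E₂` have both endpoints in `V₁ ∩ V₂`).
Then the data is `d`-realizable iff the restricted data on `(V₁, E₁)` and on `(V₂, E₂)`
are both `d`-realizable. -/
theorem balanced_sum_realizable_iff (n : ℕ) (hn : 1 ≤ n) (E : Type*) [Fintype E]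
    (t h : E → Fin n) (z : E → ℤ)
    (V₁ V₂ : Set (Fin n)) (E₁ E₂ : Set E)
    (hV : V₁ ∪ V₂ = Set.univ) (hE : E₁ ∪ E₂ = Set.univ)
    (hE₁t : ∀ e ∈ E₁, t e ∈ V₁) (hE₁h : ∀ e ∈ E₁, h e ∈ V₁) (hE₁z : ∀ e ∈ E₁, z e = 0)
    (hE₂t : ∀ e ∈ E₂, t e ∈ V₂) (hE₂h : ∀ e ∈ E₂, h e ∈ V₂)
    (hE₀t : ∀ e ∈ E₁ ∩ E₂, t e ∈ V₁ ∩ V₂) (hE₀h : ∀ e ∈ E₁ ∩ E₂, h e ∈ V₁ ∩ V₂)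
    (hE₀loop : ∀ e ∈ E₁ ∩ E₂, t e ≠ h e)
    (hE₀z : ∀ e ∈ E₁ ∩ E₂, z e = 0)
    (hcomplete : ∀ i ∈ V₁ ∩ V₂, ∀ j ∈ V₁ ∩ V₂, i ≠ j →
      ∃! e : E, e ∈ E₁ ∩ E₂ ∧ ({t e, h e} : Set (Fin n)) = {i, j})
    (d : ℕ) :
    IsRealizable (Fin n) E t h z d ↔
      (IsRealizable V₁ E₁ (fun e => ⟨t e.1, hE₁t e.1 e.2⟩) (fun e => ⟨h e.1, hE₁h e.1 e.2⟩)
          (fun e => z e.1) d ∧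
       IsRealizable V₂ E₂ (fun e => ⟨t e.1, hE₂t e.1 e.2⟩) (fun e => ⟨h e.1, hE₂h e.1 e.2⟩)
          (fun e => z e.1) d) := by
  classical
  constructor
  · intro hreal
    constructor
    · intro m p ℓ hℓ
      obtain ⟨Q, ℓ', h0, hnorm, hedge⟩ := hreal m
        (fun x => if hx : x ∈ V₁ then p ⟨x, hx⟩ else 0) ℓ hℓ
      refine ⟨fun v => Q v.1, ℓ', h0, hnorm, fun e => ?_⟩
      have key := hedge e.1
      simp only [edgeVec] at key ⊢
      rwa [dif_pos (hE₁h e.1 e.2), dif_pos (hE₁t e.1 e.2)] at key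
    · intro m p ℓ hℓ
      obtain ⟨Q, ℓ', h0, hnorm, hedge⟩ := hreal m
        (fun x => if hx : x ∈ V₂ then p ⟨x, hx⟩ else 0) ℓ hℓ
      refine ⟨fun v => Q v.1, ℓ', h0, hnorm, fun e => ?_⟩
      have key := hedge e.1
      simp only [edgeVec] at key ⊢
      rwa [dif_pos (hE₂h e.1 e.2), dif_pos (hE₂t e.1 e.2)] at key
  · rintro ⟨h1, h2⟩ m p ℓ hℓ
    obtain ⟨q₁, ℓ₁, hℓ₁0, hℓ₁, he₁⟩ := h1 m (fun v => p v.1) ℓ hℓ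
    obtain ⟨q₂, ℓ₂, hℓ₂0, hℓ₂, he₂⟩ := h2 m (fun v => p v.1) ℓ hℓ
    have hq1d : ∀ (a b : Fin n), a = b → ∀ (pa : a ∈ V₁) (pb : b ∈ V₁),
        q₁ ⟨a, pa⟩ = q₁ ⟨b, pb⟩ := by rintro a b rfl pa pb; rfl
    have hq2d : ∀ (a b : Fin n), a = b → ∀ (pa : a ∈ V₂) (pb : b ∈ V₂),
        q₂ ⟨a, pa⟩ = q₂ ⟨b, pb⟩ := by rintro a b rfl pa pb; rfl
    have hdist : ∀ i j : ↥(V₁ ∩ V₂),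
        ‖q₁ ⟨i.1, i.2.1⟩ - q₁ ⟨j.1, j.2.1⟩‖ = ‖q₂ ⟨i.1, i.2.2⟩ - q₂ ⟨j.1, j.2.2⟩‖ := by
      intro i j
      by_cases hij : i = j
      · subst hij; simp
      · have hne : (i : Fin n) ≠ (j : Fin n) := fun hc => hij (Subtype.ext hc)
        obtain ⟨e, ⟨he0, hset⟩, -⟩ := hcomplete i.1 i.2 j.1 j.2 hne
        have hz : z e = 0 := hE₀z e he0
        have key1 := he₁ ⟨e, he0.1⟩
        have key2 := he₂ ⟨e, he0.2⟩
        simp only [edgeVec, hz, Int.cast_zero, zero_smul, add_zero] at key1 key2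
        have key12 : ‖q₁ ⟨h e, hE₁h e he0.1⟩ - q₁ ⟨t e, hE₁t e he0.1⟩‖ =
            ‖q₂ ⟨h e, hE₂h e he0.2⟩ - q₂ ⟨t e, hE₂t e he0.2⟩‖ := key1.trans key2.symm
        rcases Set.pair_eq_pair_iff.mp hset with ⟨hti, hhj⟩ | ⟨htj, hhi⟩
        · rw [hq1d _ _ hti.symm i.2.1 (hE₁t e he0.1), hq1d _ _ hhj.symm j.2.1 (hE₁h e he0.1),
            hq2d _ _ hti.symm i.2.2 (hE₂t e he0.2), hq2d _ _ hhj.symm j.2.2 (hE₂h e he0.2),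
            norm_sub_rev, key12, norm_sub_rev]
        · rw [hq1d _ _ hhi.symm i.2.1 (hE₁h e he0.1), hq1d _ _ htj.symm j.2.1 (hE₁t e he0.1),
            hq2d _ _ hhi.symm i.2.2 (hE₂h e he0.2), hq2d _ _ htj.symm j.2.2 (hE₂t e he0.2)]
          exact key12
    obtain ⟨f, c, hf⟩ := exists_isometry_of_dist (fun i : ↥(V₁ ∩ V₂) => q₁ ⟨i.1, i.2.1⟩)
      (fun i => q₂ ⟨i.1, i.2.2⟩) (by exact hdist)
    have hmem1 : ∀ x : Fin n, x ∉ V₂ → x ∈ V₁ := by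
      intro x hx
      have hx2 : x ∈ V₁ ∪ V₂ := by rw [hV]; trivial
      exact hx2.resolve_right hx
    refine ⟨fun x => if hx : x ∈ V₂ then q₂ ⟨x, hx⟩ else f (q₁ ⟨x, hmem1 x hx⟩) + c,
      ℓ₂, hℓ₂0, hℓ₂, fun e => ?_⟩
    have hqV2 : ∀ (x : Fin n) (hx : x ∈ V₂),
        (if hx' : x ∈ V₂ then q₂ ⟨x, hx'⟩ else f (q₁ ⟨x, hmem1 x hx'⟩) + c) = q₂ ⟨x, hx⟩ :=
      fun x hx => dif_pos hx
    have hqV1 : ∀ (x : Fin n) (hx : x ∈ V₁),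
        (if hx' : x ∈ V₂ then q₂ ⟨x, hx'⟩ else f (q₁ ⟨x, hmem1 x hx'⟩) + c)
          = f (q₁ ⟨x, hx⟩) + c := by
      intro x hx
      by_cases hx2 : x ∈ V₂
      · rw [dif_pos hx2]
        exact (hf ⟨x, ⟨hx, hx2⟩⟩).symm
      · rw [dif_neg hx2]
    have heE : e ∈ E₁ ∪ E₂ := by rw [hE]; trivial
    by_cases he2 : e ∈ E₂
    · have key := he₂ ⟨e, he2⟩
      simp only [edgeVec] at key ⊢
      rwa [hqV2 (h e) (hE₂h e he2), hqV2 (t e) (hE₂t e he2)]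
    · have he1 : e ∈ E₁ := heE.resolve_right he2
      have hz : z e = 0 := hE₁z e he1
      have key := he₁ ⟨e, he1⟩
      simp only [edgeVec, hz, Int.cast_zero, zero_smul, add_zero] at key ⊢
      rw [hqV1 (h e) (hE₁h e he1), hqV1 (t e) (hE₁t e he1)]
      have hfe : f (q₁ ⟨h e, hE₁h e he1⟩) + c - (f (q₁ ⟨t e, hE₁t e he1⟩) + c)
          = f (q₁ ⟨h e, hE₁h e he1⟩ - q₁ ⟨t e, hE₁t e he1⟩) := by rw [map_sub]; abel
      rw [hfe, f.norm_map]
      exact key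
end

section
/- Characterization of 1-realizability (Theorem 7.3, equivalence (i) ⇔ (iv)): Let (n, E, t, h, z) be ℤ-labelled graph data with simple labelling. The data is 1-realizable if and only if the underlying directed multigraph contains no cycle other than selfloops; explicitly, if and only if no two distinct non-selfloop edges e ≠ f satisfy {t e, h e} = {t f, h f}, and the simple graph si(Ĝ) is acyclic. -/
/-- The labelling `z` is simple: selfloops have nonzero labels, and no two distinct
parallel edges have the same direction and label, or inverse directions and inverse
labels. -/
def SimpleLabelling {n : ℕ} {E : Type*} (t h : E → Fin n) (z : E → ℤ) : Prop :=
  (∀ e, t e = h e → z e ≠ 0) ∧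
  ∀ e f, e ≠ f →
    ¬((t e = t f ∧ h e = h f ∧ z e = z f) ∨ (t e = h f ∧ h e = t f ∧ z e = -z f))

/-- The simple graph `si(Ĝ)` underlying ℤ-labelled graph data: distinct vertices `i, j`
are adjacent iff some edge `e` satisfies `{t e, h e} = {i, j}`. -/
def siGraph {n : ℕ} {E : Type*} (t h : E → Fin n) : SimpleGraph (Fin n) where
  Adj i j := i ≠ j ∧ ∃ e : E, ({t e, h e} : Set (Fin n)) = {i, j}
  symm := ⟨by
    rintro i j ⟨hij, e, he⟩
    exact ⟨hij.symm, e, by rw [Set.pair_comm j i]; exact he⟩⟩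
  loopless := ⟨by rintro i ⟨hii, -⟩; exact hii rfl⟩


set_option maxHeartbeats 1000000

lemma edgeVec_apply {V E : Type*} {m : ℕ} (t h : E → V) (z : E → ℤ)
    (p : V → EuclideanSpace ℝ (Fin m)) (ℓ : EuclideanSpace ℝ (Fin m)) (e : E) (i : Fin m) :
    (edgeVec t h z p ℓ e) i = p (h e) i + (z e : ℝ) * ℓ i - p (t e) i := by
  simp [edgeVec, PiLp.add_apply, PiLp.sub_apply, PiLp.smul_apply]

lemma norm1_eq (x : EuclideanSpace ℝ (Fin 1)) : ‖x‖ = |x 0| := by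
  rw [EuclideanSpace.norm_eq]
  simp [Fin.sum_univ_one, Real.sqrt_sq_eq_abs]

lemma norm2_eq (x : EuclideanSpace ℝ (Fin 2)) : ‖x‖ = Real.sqrt ((x 0)^2 + (x 1)^2) := by
  rw [EuclideanSpace.norm_eq]
  simp [Fin.sum_univ_two, sq_abs]

lemma exists_potential {V : Type*} [Fintype V] (N : ℕ) (G : SimpleGraph V)
    (hN : G.edgeSet.ncard ≤ N) (hG : G.IsAcyclic)
    (w : V → V → ℝ) (hw : ∀ i j, w i j = - w j i) :
    ∃ x : V → ℝ, ∀ i j, G.Adj i j → x j - x i = w i j := by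
  classical
  induction N generalizing G with
  | zero =>
    refine ⟨0, fun i j hij => absurd hij fun hadj => ?_⟩
    have : s(i,j) ∈ G.edgeSet := hadj
    have hpos : 0 < G.edgeSet.ncard := (Set.ncard_pos (Set.toFinite _)).mpr ⟨_, this⟩
    omega
  | succ N ih =>
    by_cases hadj : ∃ a b, G.Adj a b
    · obtain ⟨a, b, hab⟩ := hadj
      set G' : SimpleGraph V := G \ SimpleGraph.fromEdgeSet {s(a,b)} with hG'def
      have hle : G' ≤ G := sdiff_le
      have hG'acyc : G'.IsAcyclic := fun v c hc => hG _ (hc.mapLe hle)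
      have hedge : G'.edgeSet = G.edgeSet \ {s(a,b)} := by
        rw [hG'def, SimpleGraph.edgeSet_sdiff, SimpleGraph.edgeSet_fromEdgeSet]
        rw [Set.diff_diff_right]
        have : G.edgeSet ∩ {e : Sym2 V | e.IsDiag} = ∅ := by
          ext e
          simp only [Set.mem_inter_iff, Set.mem_setOf_eq, Set.mem_empty_iff_false, iff_false]
          rintro ⟨he, hdiag⟩
          induction e with
          | h x y => exact (G.ne_of_adj he) (Sym2.mk_isDiag_iff.mp hdiag)
        rw [Sym2.diagSet_eq_setOfPred_isDiag, this, Set.union_empty]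
      have hcard : G'.edgeSet.ncard ≤ N := by
        have hmem : s(a,b) ∈ G.edgeSet := hab
        have := Set.ncard_diff_singleton_lt_of_mem hmem (Set.toFinite _)
        rw [hedge]
        omega
      obtain ⟨x, hx⟩ := ih G' hcard hG'acyc
      have hbridge : ¬ G'.Reachable a b :=
        (SimpleGraph.isAcyclic_iff_forall_adj_isBridge.mp hG hab)
      have hnotr : ¬ G'.Reachable b a := fun hr => hbridge hr.symm
      refine ⟨fun i => x i + (if G'.Reachable b i then (w a b - (x b - x a)) else 0),
        fun i j hij => ?_⟩
      dsimp only
      by_cases hsab : s(i,j) = s(a,b)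
      · rw [Sym2.eq_iff] at hsab
        rcases hsab with ⟨rfl, rfl⟩ | ⟨rfl, rfl⟩
        · rw [if_pos (SimpleGraph.Reachable.refl _), if_neg hnotr]
          ring
        · rw [if_pos (SimpleGraph.Reachable.refl _), if_neg hnotr, hw i j]
          ring
      · have hadj' : G'.Adj i j := by
          rw [hG'def, SimpleGraph.sdiff_adj]
          refine ⟨hij, fun hfe => ?_⟩
          rw [SimpleGraph.fromEdgeSet_adj] at hfe
          exact hsab hfe.1
        have hreach : G'.Reachable b i ↔ G'.Reachable b j :=
          ⟨fun hr => hr.trans hadj'.reachable, fun hr => hr.trans hadj'.symm.reachable⟩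
        have := hx i j hadj'
        by_cases hbi : G'.Reachable b i
        · rw [if_pos hbi, if_pos (hreach.mp hbi)]
          linarith
        · rw [if_neg hbi, if_neg (fun hbj => hbi (hreach.mpr hbj))]
          linarith
    · push_neg at hadj
      exact ⟨0, fun i j hij => absurd hij (hadj i j)⟩

open SimpleGraph Walk in
lemma getVert_eq_support_getElem' {V : Type*} {G : SimpleGraph V} {u v : V} (p : G.Walk u v)
    {i : ℕ} (hi : i ≤ p.length) :
    p.getVert i = p.support[i]'(by rw [SimpleGraph.Walk.length_support]; omega) := by
  induction p generalizing i with
  | nil =>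
    obtain rfl : i = 0 := Nat.le_zero.mp (by simpa using hi)
    simp
  | cons h q ih =>
    cases i with
    | zero => simp
    | succ i =>
      simp only [SimpleGraph.Walk.support_cons, SimpleGraph.Walk.getVert_cons_succ,
        List.getElem_cons_succ]
      exact ih (by simpa using hi)

lemma cycle_getVert_inj {V : Type*} {G : SimpleGraph V} {v : V} {c : G.Walk v v}
    (hc : c.IsCycle) {i j : ℕ} (hi : i < c.length) (hj : j < c.length)
    (hij : c.getVert i = c.getVert j) : i = j := by
  have hpos : 3 ≤ c.length := hc.three_le_length
  have hlen : c.support.tail.length = c.length := by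
    have := c.length_support
    simp only [List.length_tail, this]
    omega
  have hnd : c.support.tail.Nodup := hc.support_nodup
  have key : ∀ m : ℕ, m ≤ c.length → 1 ≤ m → ∀ (hb : m - 1 < c.support.tail.length),
      c.getVert m = c.support.tail[m-1]'hb := by
    intro m hm h1 hb
    rw [getVert_eq_support_getElem' c hm]
    obtain ⟨m', rfl⟩ : ∃ m', m = m' + 1 := ⟨m-1, by omega⟩
    have hsup : c.support = v :: c.support.tail := c.support_eq_cons
    simp only [List.getElem_of_eq hsup, List.getElem_cons_succ, Nat.add_sub_cancel]
  have hv0 : c.getVert 0 = v := c.getVert_zero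
  have hvL : c.getVert c.length = v := c.getVert_length
  rcases Nat.eq_zero_or_pos i with rfl | hi1 <;> rcases Nat.eq_zero_or_pos j with rfl | hj1
  · rfl
  · exfalso
    have e1 : c.support.tail[j-1]'(by omega) = c.support.tail[c.length-1]'(by omega) := by
      rw [← key j hj.le hj1 (by omega), ← key c.length le_rfl (by omega) (by omega), ← hij, hv0, hvL]
    have := hnd.getElem_inj_iff.mp e1
    omega
  · exfalso
    have e1 : c.support.tail[i-1]'(by omega) = c.support.tail[c.length-1]'(by omega) := by
      rw [← key i hi.le hi1 (by omega), ← key c.length le_rfl (by omega) (by omega), hij, hv0, hvL]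
    have := hnd.getElem_inj_iff.mp e1
    omega
  · have e1 : c.support.tail[i-1]'(by omega) = c.support.tail[j-1]'(by omega) := by
      rw [← key i hi.le hi1 (by omega), ← key j hj.le hj1 (by omega)]
      exact hij
    have := hnd.getElem_inj_iff.mp e1
    omega

lemma core_two (ze w y s a b Le Lf : ℝ) (hs : |s| = 1)
    (ha : |a| = Le) (hb : |b| = Lf) (hab : a - b = (ze - w) * s)
    (hLe2 : Le^2 = ze^2 + y^2) (hLf2 : Lf^2 = w^2 + y^2)
    (hLey : y ≤ Le) (hLfy : y ≤ Lf)
    (hD : 1 ≤ |ze - w|) (hy : y = |ze^2 - w^2| + |ze - w| + 1) : False := by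
  set D : ℝ := |ze - w| with hDdef
  set A : ℝ := |ze^2 - w^2| with hAdef
  have hA0 : 0 ≤ A := abs_nonneg _
  have hD0 : 0 ≤ D := abs_nonneg _
  have hy0 : (0:ℝ) ≤ y := by rw [hy]; positivity
  have hs2 : s^2 = 1 := by
    have := sq_abs s
    rw [hs] at this
    linarith [this.symm]
  have ha2 : a^2 = Le^2 := by rw [← ha, sq_abs]
  have hb2 : b^2 = Lf^2 := by rw [← hb, sq_abs]
  have hD2 : (a - b)^2 = D^2 := by
    rw [hab, hDdef, mul_pow, hs2, sq_abs, mul_one]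
  have hM : D^2 - Le^2 - Lf^2 = -(2*a*b) := by linear_combination ha2 + hb2 - hD2
  have key : (D^2 - (Le-Lf)^2) * (D^2 - (Le+Lf)^2) = 0 := by
    linear_combination (D^2 - Le^2 - Lf^2 - 2*a*b) * hM + 4*b^2*ha2 + 4*Le^2*hb2
  have hsum0 : 0 ≤ Le + Lf := by linarith
  rcases mul_eq_zero.mp key with hcase | hcase
  · have h1 : |Le - Lf| = D := by
      have : (Le - Lf)^2 = D^2 := by linarith
      have := (sq_eq_sq_iff_abs_eq_abs _ _).mp this
      rwa [abs_of_nonneg hD0] at this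
    have h2 : D * (Le + Lf) = A := by
      calc D * (Le + Lf) = |Le - Lf| * |Le + Lf| := by rw [h1, abs_of_nonneg hsum0]
      _ = |(Le - Lf) * (Le + Lf)| := (abs_mul _ _).symm
      _ = |ze^2 - w^2| := by congr 1; linear_combination hLe2 - hLf2
      _ = A := rfl
    have h3 : 1 * (Le + Lf) ≤ D * (Le + Lf) :=
      mul_le_mul_of_nonneg_right hD hsum0
    linarith
  · have h1 : |Le + Lf| = D := by
      have : (Le + Lf)^2 = D^2 := by linarith
      have := (sq_eq_sq_iff_abs_eq_abs _ _).mp this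
      rwa [abs_of_nonneg hD0] at this
    rw [abs_of_nonneg hsum0] at h1
    linarith

lemma forward_A (n : ℕ) (E : Type*) [Fintype E] (t h : E → Fin n) (z : E → ℤ)
    (hsimple : SimpleLabelling t h z) (hreal : IsRealizable (Fin n) E t h z 1) :
    ∀ e f : E, e ≠ f → t e ≠ h e → t f ≠ h f →
      ({t e, h e} : Set (Fin n)) ≠ {t f, h f} := by
  classical
  intro e f hef he hf hsets
  rw [Set.pair_eq_pair_iff] at hsets
  obtain ⟨w, hzw, hor⟩ : ∃ w : ℤ, z e ≠ w ∧
      ((t f = t e ∧ h f = h e ∧ w = z f) ∨ (t f = h e ∧ h f = t e ∧ w = - z f)) := by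
    rcases hsets with ⟨h1, h2⟩ | ⟨h1, h2⟩
    · exact ⟨z f, fun hzz => hsimple.2 e f hef (Or.inl ⟨h1, h2, hzz⟩),
        Or.inl ⟨h1.symm, h2.symm, rfl⟩⟩
    · exact ⟨- z f, fun hzz => hsimple.2 e f hef (Or.inr ⟨h1, h2, hzz⟩),
        Or.inr ⟨h2.symm, h1.symm, rfl⟩⟩
  have hzw' : z e - w ≠ 0 := sub_ne_zero.mpr hzw
  have hDz : (1:ℝ) ≤ |(z e : ℝ) - (w : ℝ)| := by
    have h1le : (1:ℤ) ≤ |z e - w| := by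
      rcases hzw'.lt_or_gt with hlt | hlt
      · rw [abs_of_neg hlt]; omega
      · rw [abs_of_pos hlt]; omega
    calc (1:ℝ) = ((1:ℤ):ℝ) := by norm_num
    _ ≤ ((|z e - w| : ℤ) : ℝ) := by exact_mod_cast h1le
    _ = |(z e : ℝ) - w| := by rw [Int.cast_abs]; push_cast; ring_nf
  set y : ℝ := |(z e:ℝ)^2 - (w:ℝ)^2| + |(z e:ℝ) - (w:ℝ)| + 1 with hydef
  have hy0 : 0 ≤ y := by positivity
  set p : Fin n → EuclideanSpace ℝ (Fin 2) :=
    fun i => if i = h e then EuclideanSpace.single (1 : Fin 2) y else 0 with hpdef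
  set ℓ2 : EuclideanSpace ℝ (Fin 2) := EuclideanSpace.single (0 : Fin 2) (1:ℝ) with hℓ2def
  have hnormℓ2 : ‖ℓ2‖ = 1 := by
    rw [hℓ2def, EuclideanSpace.norm_single]
    norm_num
  have hℓ2ne : ℓ2 ≠ 0 := by
    intro h0
    rw [h0, norm_zero] at hnormℓ2
    norm_num at hnormℓ2
  obtain ⟨q, ℓ', hℓ'ne, hℓ'norm, hlen⟩ := hreal 2 p ℓ2 hℓ2ne
  set s : ℝ := ℓ' 0 with hsdef
  have hs : |s| = 1 := by
    rw [hsdef, ← norm1_eq, hℓ'norm, hnormℓ2]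
  have hp_te : p (t e) = 0 := if_neg he
  have hp_he : p (h e) = EuclideanSpace.single (1 : Fin 2) y := if_pos rfl
  set Le : ℝ := Real.sqrt ((z e:ℝ)^2 + y^2) with hLedef
  set Lf : ℝ := Real.sqrt ((w:ℝ)^2 + y^2) with hLfdef
  have hℓ20 : ℓ2 0 = 1 := by rw [hℓ2def]; simp [EuclideanSpace.single_apply]
  have hℓ21 : ℓ2 1 = 0 := by rw [hℓ2def]; simp [EuclideanSpace.single_apply]
  have hLee : ‖edgeVec t h z p ℓ2 e‖ = Le := by
    have c0 : (edgeVec t h z p ℓ2 e) 0 = (z e : ℝ) := by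
      rw [edgeVec_apply, hp_he, hp_te, hℓ20]
      simp [EuclideanSpace.single_apply]
    have c1 : (edgeVec t h z p ℓ2 e) 1 = y := by
      rw [edgeVec_apply, hp_he, hp_te, hℓ21]
      simp [EuclideanSpace.single_apply]
    rw [norm2_eq, c0, c1, hLedef]
  set a : ℝ := q (h e) 0 + (z e:ℝ) * s - q (t e) 0 with hadef
  have ha : |a| = Le := by
    rw [hadef, hsdef, ← edgeVec_apply t h z q ℓ' e 0, ← norm1_eq, hlen e, hLee]
  set b : ℝ := q (h e) 0 + (w:ℝ) * s - q (t e) 0 with hbdef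
  have hb : |b| = Lf := by
    rcases hor with ⟨h1, h2, h3⟩ | ⟨h1, h2, h3⟩
    · have hp_tf : p (t f) = 0 := by rw [h1]; exact hp_te
      have hp_hf : p (h f) = EuclideanSpace.single (1 : Fin 2) y := by rw [h2]; exact hp_he
      have hLff : ‖edgeVec t h z p ℓ2 f‖ = Lf := by
        have c0 : (edgeVec t h z p ℓ2 f) 0 = (w : ℝ) := by
          rw [edgeVec_apply, hp_hf, hp_tf, hℓ20, h3]
          simp [EuclideanSpace.single_apply]
        have c1 : (edgeVec t h z p ℓ2 f) 1 = y := by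
          rw [edgeVec_apply, hp_hf, hp_tf, hℓ21]
          simp [EuclideanSpace.single_apply]
        rw [norm2_eq, c0, c1, hLfdef]
      have hbeq : b = (edgeVec t h z q ℓ' f) 0 := by
        rw [edgeVec_apply, h1, h2, hbdef, h3, ← hsdef]
        all_goals (push_cast; ring)
      rw [hbeq, ← norm1_eq, hlen f, hLff]
    · have hp_tf : p (t f) = EuclideanSpace.single (1 : Fin 2) y := by rw [h1]; exact hp_he
      have hp_hf : p (h f) = 0 := by rw [h2]; exact hp_te
      have hLff : ‖edgeVec t h z p ℓ2 f‖ = Lf := by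
        have c0 : (edgeVec t h z p ℓ2 f) 0 = (z f : ℝ) := by
          rw [edgeVec_apply, hp_hf, hp_tf, hℓ20]
          simp [EuclideanSpace.single_apply]
        have c1 : (edgeVec t h z p ℓ2 f) 1 = -y := by
          rw [edgeVec_apply, hp_hf, hp_tf, hℓ21]
          simp [EuclideanSpace.single_apply]
        rw [norm2_eq, c0, c1, hLfdef, h3]
        push_cast
        ring_nf
      have hbeq : b = -((edgeVec t h z q ℓ' f) 0) := by
        rw [edgeVec_apply, h1, h2, hbdef, h3, ← hsdef]
        all_goals (push_cast; ring)
      rw [hbeq, abs_neg, ← norm1_eq, hlen f, hLff]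
  have hLe2 : Le^2 = (z e:ℝ)^2 + y^2 := by
    rw [hLedef, Real.sq_sqrt (by positivity)]
  have hLf2 : Lf^2 = (w:ℝ)^2 + y^2 := by
    rw [hLfdef, Real.sq_sqrt (by positivity)]
  have hLey : y ≤ Le := by
    rw [hLedef]
    calc y = Real.sqrt (y^2) := by rw [Real.sqrt_sq hy0]
    _ ≤ _ := Real.sqrt_le_sqrt (by nlinarith [sq_nonneg ((z e : ℝ))])
  have hLfy : y ≤ Lf := by
    rw [hLfdef]
    calc y = Real.sqrt (y^2) := by rw [Real.sqrt_sq hy0]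
    _ ≤ _ := Real.sqrt_le_sqrt (by nlinarith [sq_nonneg ((w : ℝ))])
  exact core_two (z e:ℝ) (w:ℝ) y s a b Le Lf hs ha hb (by rw [hadef, hbdef]; ring)
    hLe2 hLf2 hLey hLfy hDz hydef

lemma forward_B (n : ℕ) (E : Type*) [Fintype E] (t h : E → Fin n) (z : E → ℤ)
    (hreal : IsRealizable (Fin n) E t h z 1) : (siGraph t h).IsAcyclic := by
  classical
  intro v c hc
  set k : ℕ := c.length with hkdef
  have hk3 : 3 ≤ k := hc.three_le_length
  have hk0 : 0 < k := by omega
  set vv : ℕ → Fin n := c.getVert with hvvdef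
  have hinj : ∀ i j, i < k → j < k → vv i = vv j → i = j := fun i j hi hj hij =>
    cycle_getVert_inj hc hi hj hij
  have hvk : vv k = vv 0 := by rw [hvvdef]; rw [c.getVert_length, c.getVert_zero]
  have hadjj : ∀ j, j < k → (siGraph t h).Adj (vv j) (vv (j+1)) :=
    fun j hj => c.adj_getVert_succ hj
  have hch : ∀ j, j < k → ∃ eε : E × ℝ,
      ((eε.2 = 1 ∧ t eε.1 = vv j ∧ h eε.1 = vv (j+1)) ∨
       (eε.2 = -1 ∧ t eε.1 = vv (j+1) ∧ h eε.1 = vv j)) := by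
    intro j hj
    obtain ⟨hne, e0, hpair⟩ := hadjj j hj
    rw [Set.pair_eq_pair_iff] at hpair
    rcases hpair with ⟨h1, h2⟩ | ⟨h1, h2⟩
    · exact ⟨(e0, 1), Or.inl ⟨rfl, h1, h2⟩⟩
    · exact ⟨(e0, -1), Or.inr ⟨rfl, h1, h2⟩⟩
  choose F hF using hch
  set ee : ℕ → E := fun j => if hj : j < k then (F j hj).1 else (F 0 hk0).1 with heedef
  set ε : ℕ → ℝ := fun j => if hj : j < k then (F j hj).2 else (F 0 hk0).2 with hεdef
  have hFj : ∀ j, j < k →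
      ((ε j = 1 ∧ t (ee j) = vv j ∧ h (ee j) = vv (j+1)) ∨
       (ε j = -1 ∧ t (ee j) = vv (j+1) ∧ h (ee j) = vv j)) := by
    intro j hj
    simp only [heedef, hεdef, dif_pos hj]
    exact hF j hj
  set ζ : ℕ → ℝ := fun j => ε j * (z (ee j) : ℝ) with hζdef
  set Z : ℝ := ∑ j ∈ Finset.range k, ζ j with hZdef
  set G : ℝ := |Z| + 1 with hGdef
  have hG0 : 0 < G := by positivity
  set T : ℝ := ∑ j ∈ Finset.Ico 2 k, (4:ℝ)^j * G with hTdef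
  have hT0 : 0 ≤ T := Finset.sum_nonneg (fun j _ => by positivity)
  set y : ℝ := |Z| + T + 1 with hydef
  have hy0 : (0:ℝ) < y := by positivity
  set g : ℝ := (Z - T) / 2 with hgdef
  set ux : ℕ → ℝ := fun j => if j = 0 then g else if j = 1 then g else (4:ℝ)^j * G with huxdef
  set uy : ℕ → ℝ := fun j => if j = 0 then y else if j = 1 then -y else 0 with huydef
  set Px : ℕ → ℝ := fun j => ∑ i ∈ Finset.range j, (ux i - ζ i) with hPxdef
  set Py : ℕ → ℝ := fun j => ∑ i ∈ Finset.range j, uy i with hPydef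
  have hsplit : ∀ f : ℕ → ℝ,
      ∑ j ∈ Finset.range k, f j = f 0 + f 1 + ∑ j ∈ Finset.Ico 2 k, f j := by
    intro f
    rw [Finset.range_eq_Ico,
      ← Finset.sum_Ico_consecutive f (by omega : 0 ≤ 2) (by omega : 2 ≤ k)]
    congr 1
    rw [← Finset.range_eq_Ico, Finset.sum_range_succ, Finset.sum_range_one]
  have hux2 : ∀ j, 2 ≤ j → ux j = (4:ℝ)^j * G := by
    intro j hj
    simp only [huxdef]
    rw [if_neg (by omega), if_neg (by omega)]
  have huy2 : ∀ j, 2 ≤ j → uy j = 0 := by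
    intro j hj
    simp only [huydef]
    rw [if_neg (by omega), if_neg (by omega)]
  have hux0 : ux 0 = g := by simp [huxdef]
  have hux1 : ux 1 = g := by simp [huxdef]
  have huy0 : uy 0 = y := by simp [huydef]
  have huy1 : uy 1 = -y := by simp [huydef]
  have huxsum : ∑ j ∈ Finset.range k, ux j = g + g + T := by
    rw [hsplit ux, hux0, hux1, hTdef]
    congr 1
    exact Finset.sum_congr rfl (fun j hj => hux2 j (Finset.mem_Ico.mp hj).1)
  have hPxk : Px k = 0 := by
    simp only [hPxdef]
    rw [Finset.sum_sub_distrib, huxsum, ← hZdef, hgdef]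
    ring
  have hPyk : Py k = 0 := by
    simp only [hPydef]
    rw [hsplit uy, huy0, huy1]
    rw [Finset.sum_eq_zero (fun j hj => huy2 j (Finset.mem_Ico.mp hj).1)]
    ring
  have hPx0 : Px 0 = 0 := by simp [hPxdef]
  have hPy0 : Py 0 = 0 := by simp [hPydef]
  set P2 : ℕ → EuclideanSpace ℝ (Fin 2) := fun j =>
    EuclideanSpace.single 0 (Px j) + EuclideanSpace.single 1 (Py j) with hP2def
  have hP20 : ∀ j, P2 j 0 = Px j := fun j => by
    simp [hP2def, PiLp.add_apply, EuclideanSpace.single_apply]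
  have hP21 : ∀ j, P2 j 1 = Py j := fun j => by
    simp [hP2def, PiLp.add_apply, EuclideanSpace.single_apply]
  set p : Fin n → EuclideanSpace ℝ (Fin 2) := fun i =>
    if hi : ∃ j, j < k ∧ vv j = i then P2 hi.choose else 0 with hpdef
  have hp : ∀ j, j < k → p (vv j) = P2 j := by
    intro j hj
    have hex : ∃ j', j' < k ∧ vv j' = vv j := ⟨j, hj, rfl⟩
    simp only [hpdef]
    rw [dif_pos hex]
    have hspec := hex.choose_spec
    rw [hinj _ _ hspec.1 hj hspec.2]
  have hpk : ∀ j, j ≤ k → (p (vv j)) 0 = Px j ∧ (p (vv j)) 1 = Py j := by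
    intro j hj
    rcases Nat.lt_or_ge j k with hlt | hge
    · rw [hp j hlt]
      exact ⟨hP20 j, hP21 j⟩
    · have hjk : j = k := by omega
      subst hjk
      rw [hvk, hp 0 hk0, hP20, hP21, hPx0, hPy0, hPxk, hPyk]
      exact ⟨rfl, rfl⟩
  set ℓ2 : EuclideanSpace ℝ (Fin 2) := EuclideanSpace.single (0 : Fin 2) (1:ℝ) with hℓ2def
  have hnormℓ2 : ‖ℓ2‖ = 1 := by
    rw [hℓ2def, EuclideanSpace.norm_single]
    norm_num
  have hℓ2ne : ℓ2 ≠ 0 := by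
    intro h0
    rw [h0, norm_zero] at hnormℓ2
    norm_num at hnormℓ2
  have hℓ20 : ℓ2 0 = 1 := by rw [hℓ2def]; simp [EuclideanSpace.single_apply]
  have hℓ21 : ℓ2 1 = 0 := by rw [hℓ2def]; simp [EuclideanSpace.single_apply]
  have hL2 : ∀ j, j < k →
      ‖edgeVec t h z p ℓ2 (ee j)‖ = Real.sqrt ((ux j)^2 + (uy j)^2) := by
    intro j hj
    have hPx1 : Px (j+1) = Px j + (ux j - ζ j) := Finset.sum_range_succ _ j
    have hPy1 : Py (j+1) = Py j + uy j := Finset.sum_range_succ _ j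
    obtain ⟨hpj0, hpj1⟩ := hpk j (le_of_lt hj)
    obtain ⟨hpj0', hpj1'⟩ := hpk (j+1) hj
    have hζj1 : ε j = 1 → ζ j = (z (ee j) : ℝ) := fun hε => by
      simp only [hζdef]; rw [hε]; ring
    have hζj2 : ε j = -1 → ζ j = -(z (ee j) : ℝ) := fun hε => by
      simp only [hζdef]; rw [hε]; ring
    rcases hFj j hj with ⟨hε, ht, hh⟩ | ⟨hε, ht, hh⟩
    · have c0 : (edgeVec t h z p ℓ2 (ee j)) 0 = ux j := by
        rw [edgeVec_apply, ht, hh, hℓ20, hpj0, hpj0', hPx1, hζj1 hε]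
        ring
      have c1 : (edgeVec t h z p ℓ2 (ee j)) 1 = uy j := by
        rw [edgeVec_apply, ht, hh, hℓ21, hpj1, hpj1', hPy1]
        ring
      rw [norm2_eq, c0, c1]
    · have c0 : (edgeVec t h z p ℓ2 (ee j)) 0 = -(ux j) := by
        rw [edgeVec_apply, ht, hh, hℓ20, hpj0, hpj0', hPx1, hζj2 hε]
        ring
      have c1 : (edgeVec t h z p ℓ2 (ee j)) 1 = -(uy j) := by
        rw [edgeVec_apply, ht, hh, hℓ21, hpj1, hpj1', hPy1]
        ring
      rw [norm2_eq, c0, c1]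
      congr 1
      ring
  obtain ⟨q, ℓ', hℓ'ne, hℓ'norm, hlen⟩ := hreal 2 p ℓ2 hℓ2ne
  set s : ℝ := ℓ' 0 with hsdef
  have hs : |s| = 1 := by rw [hsdef, ← norm1_eq, hℓ'norm, hnormℓ2]
  set x : Fin n → ℝ := fun i => q i 0 with hxdef
  set A : ℕ → ℝ := fun j => x (h (ee j)) + (z (ee j) : ℝ) * s - x (t (ee j)) with hAdef
  have hA : ∀ j, j < k → |A j| = Real.sqrt ((ux j)^2 + (uy j)^2) := by
    intro j hj
    have hAj : A j = (edgeVec t h z q ℓ' (ee j)) 0 := by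
      simp only [hAdef, hxdef]
      rw [edgeVec_apply, hsdef]
    rw [hAj, ← norm1_eq, hlen, hL2 j hj]
  have hterm : ∀ j, j < k → x (vv (j+1)) - x (vv j) = ε j * A j - ζ j * s := by
    intro j hj
    rcases hFj j hj with ⟨hε, ht, hh⟩ | ⟨hε, ht, hh⟩
    · simp only [hAdef, hζdef]
      rw [hε, ht, hh]
      ring
    · simp only [hAdef, hζdef]
      rw [hε, ht, hh]
      ring
  have htel : ∑ j ∈ Finset.range k, (x (vv (j+1)) - x (vv j)) = 0 := by
    rw [Finset.sum_range_sub (fun j => x (vv j)), hvk, sub_self]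
  have hZs : Z * s = ∑ j ∈ Finset.range k, ε j * A j := by
    have h1 : ∑ j ∈ Finset.range k, (ε j * A j - ζ j * s) = 0 := by
      rw [← htel]
      exact Finset.sum_congr rfl (fun j hj => (hterm j (Finset.mem_range.mp hj)).symm)
    have h2 : ∑ j ∈ Finset.range k, (ε j * A j - ζ j * s)
        = (∑ j ∈ Finset.range k, ε j * A j) - Z * s := by
      rw [Finset.sum_sub_distrib]
      congr 1
      rw [hZdef, Finset.sum_mul]
    rw [h2] at h1
    linarith
  have habsεA : ∀ j, j < k → |ε j * A j| = Real.sqrt ((ux j)^2 + (uy j)^2) := by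
    intro j hj
    rw [abs_mul, hA j hj]
    rcases hFj j hj with ⟨hε, -, -⟩ | ⟨hε, -, -⟩ <;> rw [hε] <;> norm_num
  have hEA : ∀ j, 2 ≤ j → j < k → |ε j * A j| = (4:ℝ)^j * G := by
    intro j h2j hj
    rw [habsεA j hj, hux2 j h2j, huy2 j h2j]
    have harg : ((4:ℝ)^j * G)^2 + (0:ℝ)^2 = ((4:ℝ)^j * G)^2 := by ring
    rw [harg, Real.sqrt_sq (by positivity)]
  set Λ : ℝ := Real.sqrt (g^2 + y^2) with hΛdef
  have hΛ0 : 0 ≤ Λ := Real.sqrt_nonneg _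
  have hA0 : |ε 0 * A 0| = Λ := by
    rw [habsεA 0 hk0, hux0, huy0]
  have hA1 : |ε 1 * A 1| = Λ := by
    rw [habsεA 1 (by omega), hux1, huy1, hΛdef]
    congr 1
    ring
  have hΛy : y ≤ Λ := by
    rw [hΛdef]
    calc y = Real.sqrt (y^2) := by rw [Real.sqrt_sq hy0.le]
    _ ≤ _ := Real.sqrt_le_sqrt (by nlinarith [sq_nonneg g])
  set R : ℝ := ∑ j ∈ Finset.Ico 2 k, ε j * A j with hRdef
  have hRub : |R| ≤ T := by
    rw [hRdef, hTdef]
    calc |∑ j ∈ Finset.Ico 2 k, ε j * A j| ≤ ∑ j ∈ Finset.Ico 2 k, |ε j * A j| :=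
      Finset.abs_sum_le_sum_abs _ _
    _ = ∑ j ∈ Finset.Ico 2 k, (4:ℝ)^j * G := Finset.sum_congr rfl (fun j hj => by
        have hm := Finset.mem_Ico.mp hj
        exact hEA j hm.1 hm.2)
  have hsplit2 : R = (∑ j ∈ Finset.Ico 2 (k-1), ε j * A j) + ε (k-1) * A (k-1) := by
    rw [hRdef]
    have hkk : k = k - 1 + 1 := by omega
    conv_lhs => rw [hkk]
    rw [Finset.sum_Ico_succ_top (by omega : 2 ≤ k - 1)]
  have hgeo : ∑ j ∈ Finset.Ico 2 (k-1), ((4:ℝ)^j * G) = ((4:ℝ)^(k-1) - 16)/3 * G := by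
    rw [← Finset.sum_mul]
    congr 1
    have h1 : ∑ j ∈ Finset.range (k-1), (4:ℝ)^j = ((4:ℝ)^(k-1) - 1)/3 := by
      rw [geom_sum_eq (by norm_num : (4:ℝ) ≠ 1)]
      norm_num
    have h2 : ∑ j ∈ Finset.range 2, (4:ℝ)^j = 5 := by
      rw [Finset.sum_range_succ, Finset.sum_range_one]
      norm_num
    rw [Finset.sum_Ico_eq_sub _ (by omega : 2 ≤ k - 1), h1, h2]
    ring
  have hrest : |∑ j ∈ Finset.Ico 2 (k-1), ε j * A j| ≤ ((4:ℝ)^(k-1) - 16)/3 * G := by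
    calc |∑ j ∈ Finset.Ico 2 (k-1), ε j * A j|
        ≤ ∑ j ∈ Finset.Ico 2 (k-1), |ε j * A j| := Finset.abs_sum_le_sum_abs _ _
    _ = ∑ j ∈ Finset.Ico 2 (k-1), ((4:ℝ)^j * G) := Finset.sum_congr rfl (fun j hj => by
        have hm := Finset.mem_Ico.mp hj
        exact hEA j hm.1 (by omega))
    _ = _ := hgeo
  have hlast : |ε (k-1) * A (k-1)| = (4:ℝ)^(k-1) * G :=
    hEA (k-1) (by omega) (by omega)
  have h16 : (16:ℝ) ≤ (4:ℝ)^(k-1) - ((4:ℝ)^(k-1) - 16)/3 := by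
    have h44 : (4:ℝ)^2 ≤ (4:ℝ)^(k-1) := by
      apply pow_le_pow_right₀ (by norm_num) (by omega)
    norm_num at h44
    linarith
  have htri : |ε (k-1) * A (k-1)| - |∑ j ∈ Finset.Ico 2 (k-1), ε j * A j| ≤ |R| := by
    rw [hsplit2]
    have h := abs_sub_abs_le_abs_sub (ε (k-1) * A (k-1))
      (-(∑ j ∈ Finset.Ico 2 (k-1), ε j * A j))
    rw [abs_neg, sub_neg_eq_add] at h
    calc _ ≤ |ε (k-1) * A (k-1) + ∑ j ∈ Finset.Ico 2 (k-1), ε j * A j| := h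
    _ = _ := by rw [add_comm]
  have hRlb : 16 * G ≤ |R| := by
    have h1 : 16 * G ≤ ((4:ℝ)^(k-1) - ((4:ℝ)^(k-1) - 16)/3) * G :=
      mul_le_mul_of_nonneg_right h16 hG0.le
    calc 16 * G ≤ ((4:ℝ)^(k-1) - ((4:ℝ)^(k-1) - 16)/3) * G := h1
    _ = (4:ℝ)^(k-1) * G - ((4:ℝ)^(k-1) - 16)/3 * G := by ring
    _ ≤ |ε (k-1) * A (k-1)| - |∑ j ∈ Finset.Ico 2 (k-1), ε j * A j| := by
        rw [hlast]
        linarith [hrest]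
    _ ≤ |R| := htri
  have hsum3 : Z * s = ε 0 * A 0 + ε 1 * A 1 + R := by
    rw [hZs, hsplit (fun j => ε j * A j), hRdef]
  have hZabs : |Z * s| = |Z| := by rw [abs_mul, hs, mul_one]
  have hcases : ε 0 * A 0 + ε 1 * A 1 = 0 ∨ |ε 0 * A 0 + ε 1 * A 1| = 2 * Λ := by
    rcases (abs_eq hΛ0).mp hA0 with h0 | h0 <;> rcases (abs_eq hΛ0).mp hA1 with h1 | h1
    · right
      rw [h0, h1, abs_of_nonneg (by linarith)]
      ring
    · left
      rw [h0, h1]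
      ring
    · left
      rw [h0, h1]
      ring
    · right
      rw [h0, h1, abs_of_nonpos (by linarith)]
      ring
  rcases hcases with hB | hB
  · have hZR : |Z| = |R| := by rw [← hZabs, hsum3, hB, zero_add]
    have h2 : 16 * G ≤ |Z| := hZR ▸ hRlb
    rw [hGdef] at h2
    have := abs_nonneg Z
    linarith
  · have h1 : |ε 0 * A 0 + ε 1 * A 1| - |R| ≤ |Z| := by
      rw [← hZabs, hsum3]
      have h := abs_sub_abs_le_abs_sub (ε 0 * A 0 + ε 1 * A 1) (-R)
      rw [abs_neg, sub_neg_eq_add] at h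
      linarith [h]
    rw [hB] at h1
    have := abs_nonneg Z
    linarith [hΛy, hRub, hT0]

lemma backward_dir (n : ℕ) (E : Type*) [Fintype E] (t h : E → Fin n) (z : E → ℤ)
    (hA : ∀ e f : E, e ≠ f → t e ≠ h e → t f ≠ h f →
      ({t e, h e} : Set (Fin n)) ≠ {t f, h f})
    (hB : (siGraph t h).IsAcyclic) :
    IsRealizable (Fin n) E t h z 1 := by
  classical
  intro m p ℓ hℓ
  set L : E → ℝ := fun e => ‖edgeVec t h z p ℓ e‖ with hLdef
  set δ : E → ℝ := fun e => L e - (z e : ℝ) * ‖ℓ‖ with hδdef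
  set w : Fin n → Fin n → ℝ := fun i j =>
    (∑ e : E, if t e = i ∧ h e = j then δ e else 0)
    - (∑ e : E, if t e = j ∧ h e = i then δ e else 0) with hwdef
  have hw : ∀ i j, w i j = - w j i := by
    intro i j
    simp only [hwdef]
    ring
  obtain ⟨x, hx⟩ := exists_potential (siGraph t h).edgeSet.ncard (siGraph t h) le_rfl hB w hw
  have hxe : ∀ e : E, t e ≠ h e → x (h e) - x (t e) = δ e := by
    intro e he
    have hadj : (siGraph t h).Adj (t e) (h e) := ⟨he, e, rfl⟩
    rw [hx _ _ hadj, hwdef]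
    have h1 : (∑ f : E, if t f = t e ∧ h f = h e then δ f else 0) = δ e := by
      rw [Finset.sum_eq_single e]
      · simp
      · intro f _ hfe
        rw [if_neg]
        rintro ⟨h1, h2⟩
        by_cases hf : t f = h f
        · exact he (by rw [← h1, hf, h2])
        · exact hA f e hfe hf he (by rw [h1, h2])
      · intro hne
        exact absurd (Finset.mem_univ e) hne
    have h2 : (∑ f : E, if t f = h e ∧ h f = t e then δ f else 0) = 0 := by
      apply Finset.sum_eq_zero
      intro f _
      rw [if_neg]
      rintro ⟨h1, h2⟩
      by_cases hfe : f = e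
      · subst hfe
        exact he h1
      · by_cases hf : t f = h f
        · exact he (by rw [← h2, ← hf, h1])
        · exact hA f e hfe hf he (by rw [h1, h2, Set.pair_comm])
    dsimp only
    rw [h1, h2]
    ring
  refine ⟨fun i => EuclideanSpace.single 0 (x i), EuclideanSpace.single 0 ‖ℓ‖, ?_, ?_, ?_⟩
  · intro h0
    apply hℓ
    rw [← norm_eq_zero] at h0 ⊢
    rwa [EuclideanSpace.norm_single (𝕜 := ℝ) (0 : Fin 1) ‖ℓ‖, norm_norm] at h0
  · rw [EuclideanSpace.norm_single (𝕜 := ℝ) (0 : Fin 1) ‖ℓ‖, norm_norm]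
  · intro e
    have heval : (edgeVec t h z (fun i => EuclideanSpace.single (0 : Fin 1) (x i))
        (EuclideanSpace.single (0 : Fin 1) ‖ℓ‖) e) (0 : Fin 1) = x (h e) + (z e : ℝ) * ‖ℓ‖ - x (t e) := by
      simp [edgeVec, PiLp.add_apply, PiLp.sub_apply, PiLp.smul_apply,
        EuclideanSpace.single_apply]
    rw [norm1_eq, heval]
    by_cases he : t e = h e
    · have hvec : edgeVec t h z p ℓ e = (z e : ℝ) • ℓ := by
        rw [edgeVec, he, add_sub_cancel_left]
      rw [hvec, he, norm_smul]
      simp only [add_sub_cancel_left]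
      rw [abs_mul, Real.norm_eq_abs, abs_of_nonneg (norm_nonneg ℓ)]
    · have : x (h e) + (z e : ℝ) * ‖ℓ‖ - x (t e) = L e := by
        have := hxe e he
        rw [hδdef] at this
        simp only at this
        linarith
      rw [this, hLdef]
      exact abs_of_nonneg (norm_nonneg _)

/-- Theorem 7.3 ((i) ⇔ (iv)): ℤ-labelled graph data with simple labelling is
`1`-realizable if and only if the underlying directed multigraph contains no cycle other
than selfloops, i.e. no two distinct non-selfloop edges are parallel and the simple
graph `si(Ĝ)` is acyclic. -/
theorem one_realizable_iff_no_cycle (n : ℕ) (hn : 1 ≤ n) (E : Type*) [Fintype E]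
    (t h : E → Fin n) (z : E → ℤ) (hsimple : SimpleLabelling t h z) :
    IsRealizable (Fin n) E t h z 1 ↔
      ((∀ e f : E, e ≠ f → t e ≠ h e → t f ≠ h f →
          ({t e, h e} : Set (Fin n)) ≠ {t f, h f}) ∧
       (siGraph t h).IsAcyclic) := by
  constructor
  · intro hreal
    exact ⟨forward_A n E t h z hsimple hreal, forward_B n E t h z hreal⟩
  · rintro ⟨hA, hB⟩
    exact backward_dir n E t h z hA hB
end
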